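/- arXiv:2208.02398 — 11 statements merged into one kernel-verified Lean document; each statement's English description precedes it below -/
import Mathlib

section
/- Let K be a field and let R and R* be subrings of K with fraction field K, with R ≠ K and R* ≠ K. Then the following are equivalent: (1) the R-adic topology on K refines the R*-adic topology; (2) R* is open in the R-adic topology; (3) there exists α ∈ K^× with α·R ⊆ R*; (4) R is a bounded subset of K with respect to the R*-adic topology. -/
open Topology

/-- The collection `{aR + b : a ∈ K^×, b ∈ K}`, a basis for the `R`-adic topology. -/
def adicBasis {K : Type*} [Field K] (R : Subring K) : Set (Set K) :=
  {s | ∃ a b : K, a ≠ 0 ∧ s = {x | ∃ r ∈ R, x = a * r + b}}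

/-- The `R`-adic topology on `K`: the topology with basis `{aR + b : a ∈ K^×, b ∈ K}`. -/
def adicTopology {K : Type*} [Field K] (R : Subring K) : TopologicalSpace K :=
  TopologicalSpace.generateFrom (adicBasis R)

/-! Once `R` has fraction field `K`, a set is an `R`-adic neighbourhood of `x` exactly when it
contains a coset `x + aR` with `a ≠ 0`; each implication of the theorem is then a rescaling
of such cosets by the `α` of condition (3). -/

namespace Subring

variable {K : Type*} [Field K] (R : Subring K)

lemma adicCoset_eq_of_mem {a b x : K} (hx : ∃ r ∈ R, x = a * r + b) :
    {y : K | ∃ r ∈ R, y = a * r + b} = {y : K | ∃ r ∈ R, y = a * r + x} := by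
  obtain ⟨r₀, hr₀, rfl⟩ := hx
  ext y
  constructor
  · rintro ⟨r, hr, rfl⟩
    exact ⟨r - r₀, R.sub_mem hr hr₀, by ring⟩
  · rintro ⟨r, hr, rfl⟩
    exact ⟨r + r₀, R.add_mem hr hr₀, by ring⟩

lemma coe_mem_adicBasis : (R : Set K) ∈ adicBasis R :=
  ⟨1, 0, one_ne_zero, by ext x; simp⟩

lemma isOpen_adicTopology_coe : IsOpen[adicTopology R] (R : Set K) :=
  TopologicalSpace.isOpen_generateFrom_of_mem R.coe_mem_adicBasis

variable {R}

lemma exists_ne_zero_mul_mem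
    (hfrac : ∀ x : K, ∃ a ∈ R, ∃ b ∈ R, b ≠ 0 ∧ x = a / b) {a : K} (ha : a ≠ 0) :
    ∃ p ∈ R, ∃ q ∈ R, p ≠ 0 ∧ p = a * q := by
  obtain ⟨p, hp, q, hq, hq0, rfl⟩ := hfrac a
  exact ⟨p, hp, q, hq, by simpa [hq0] using ha, by field_simp⟩

lemma isTopologicalBasis_adicBasis
    (hfrac : ∀ x : K, ∃ a ∈ R, ∃ b ∈ R, b ≠ 0 ∧ x = a / b) :
    @TopologicalSpace.IsTopologicalBasis K (adicTopology R) (adicBasis R) := by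
  let _ : TopologicalSpace K := adicTopology R
  refine ⟨?_, ?_, rfl⟩
  · rintro t₁ ⟨a₁, b₁, ha₁, rfl⟩ t₂ ⟨a₂, b₂, ha₂, rfl⟩ x ⟨hx₁, hx₂⟩
    rw [R.adicCoset_eq_of_mem hx₁, R.adicCoset_eq_of_mem hx₂]
    obtain ⟨p₁, hp₁, q₁, hq₁, hp₁0, e₁⟩ := exists_ne_zero_mul_mem hfrac ha₁
    obtain ⟨p₂, hp₂, q₂, hq₂, hp₂0, e₂⟩ := exists_ne_zero_mul_mem hfrac ha₂
    -- `p₁ p₂ R ⊆ a₁ R ∩ a₂ R` since `p₁ p₂ = a₁ (q₁ p₂) = a₂ (q₂ p₁)`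
    refine ⟨{y : K | ∃ r ∈ R, y = p₁ * p₂ * r + x},
      ⟨p₁ * p₂, x, mul_ne_zero hp₁0 hp₂0, rfl⟩, ⟨0, R.zero_mem, by ring⟩, ?_⟩
    rintro y ⟨r, hr, rfl⟩
    exact ⟨⟨q₁ * p₂ * r, R.mul_mem (R.mul_mem hq₁ hp₂) hr, by rw [e₁]; ring⟩,
      ⟨q₂ * p₁ * r, R.mul_mem (R.mul_mem hq₂ hp₁) hr, by rw [e₂]; ring⟩⟩
  · refine Set.eq_univ_of_forall fun x => Set.mem_sUnion.2
      ⟨{y : K | ∃ r ∈ R, y = 1 * r + x}, ⟨1, x, one_ne_zero, rfl⟩,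
        ⟨0, R.zero_mem, by ring⟩⟩

lemma mem_nhds_adicTopology_iff
    (hfrac : ∀ x : K, ∃ a ∈ R, ∃ b ∈ R, b ≠ 0 ∧ x = a / b) {x : K} {s : Set K} :
    s ∈ @nhds K (adicTopology R) x ↔ ∃ a : K, a ≠ 0 ∧ ∀ r ∈ R, a * r + x ∈ s := by
  rw [@TopologicalSpace.IsTopologicalBasis.mem_nhds_iff K (adicTopology R) _ _ _
    (isTopologicalBasis_adicBasis hfrac)]
  constructor
  · rintro ⟨t, ⟨a, b, ha, rfl⟩, hxt, hts⟩
    rw [R.adicCoset_eq_of_mem hxt] at hts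
    exact ⟨a, ha, fun r hr => hts ⟨r, hr, rfl⟩⟩
  · rintro ⟨a, ha, has⟩
    exact ⟨_, ⟨a, x, ha, rfl⟩, ⟨0, R.zero_mem, by ring⟩,
      fun y ⟨r, hr, hy⟩ => hy ▸ has r hr⟩

lemma mem_nhds_zero_adicTopology_iff
    (hfrac : ∀ x : K, ∃ a ∈ R, ∃ b ∈ R, b ≠ 0 ∧ x = a / b) {s : Set K} :
    s ∈ @nhds K (adicTopology R) 0 ↔ ∃ a : K, a ≠ 0 ∧ ∀ r ∈ R, a * r ∈ s := by
  simp only [mem_nhds_adicTopology_iff hfrac, add_zero]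

end Subring

open Subring in
theorem statement0_general {K : Type*} [Field K] (R Rs : Subring K)
    (hRfrac : ∀ x : K, ∃ a ∈ R, ∃ b ∈ R, b ≠ 0 ∧ x = a / b)
    (hRsfrac : ∀ x : K, ∃ a ∈ Rs, ∃ b ∈ Rs, b ≠ 0 ∧ x = a / b) :
    List.TFAE
      [ (∀ s : Set K, IsOpen[adicTopology Rs] s → IsOpen[adicTopology R] s),
        IsOpen[adicTopology R] (Rs : Set K),
        (∃ α : K, α ≠ 0 ∧ ∀ r ∈ R, α * r ∈ Rs),
        (∀ U ∈ @nhds K (adicTopology Rs) 0, ∃ V ∈ @nhds K (adicTopology Rs) 0,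
          ∀ v ∈ V, ∀ b ∈ (R : Set K), v * b ∈ U) ] := by
  tfae_have 1 → 2 := fun h => h _ Rs.isOpen_adicTopology_coe
  tfae_have 2 → 3
  | h => (mem_nhds_zero_adicTopology_iff hRfrac).1
      (@IsOpen.mem_nhds K (adicTopology R) _ _ h Rs.zero_mem)
  tfae_have 3 → 1
  | ⟨α, hα, hαR⟩, s, hs => by
    rw [@isOpen_iff_mem_nhds] at hs ⊢
    intro x hx
    obtain ⟨a, ha, has⟩ := (mem_nhds_adicTopology_iff hRsfrac).1 (hs x hx)
    refine (mem_nhds_adicTopology_iff hRfrac).2 ⟨a * α, mul_ne_zero ha hα, fun r hr => ?_⟩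
    simpa only [mul_assoc] using has _ (hαR r hr)
  tfae_have 3 → 4
  | ⟨α, hα, hαR⟩, U, hU => by
    obtain ⟨a, ha, haU⟩ := (mem_nhds_zero_adicTopology_iff hRsfrac).1 hU
    refine ⟨{v | ∃ s ∈ Rs, v = a * α * s},
      (mem_nhds_zero_adicTopology_iff hRsfrac).2
        ⟨a * α, mul_ne_zero ha hα, fun s hs => ⟨s, hs, rfl⟩⟩, ?_⟩
    rintro v ⟨s, hs, rfl⟩ r hr
    simpa only [mul_assoc, mul_left_comm α s r] using haU _ (Rs.mul_mem hs (hαR r hr))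
  tfae_have 4 → 3
  | h => by
    obtain ⟨V, hV, hVR⟩ := h _ (@IsOpen.mem_nhds K (adicTopology Rs) _ _
      Rs.isOpen_adicTopology_coe Rs.zero_mem)
    obtain ⟨a, ha, haV⟩ := (mem_nhds_zero_adicTopology_iff hRsfrac).1 hV
    exact ⟨a, ha, hVR a (by simpa using haV 1 Rs.one_mem)⟩
  tfae_finish

/-- For subrings `R, R*` of a field `K`, each with fraction field `K` and
different from `K`, the following are equivalent: (1) the `R`-adic topology refines the
`R*`-adic topology; (2) `R*` is `R`-adically open; (3) `αR ⊆ R*` for some `α ∈ K^×`;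
(4) `R` is bounded in the `R*`-adic topology. -/
theorem statement0 {K : Type*} [Field K] (R Rs : Subring K)
    (hR : R ≠ ⊤) (hRs : Rs ≠ ⊤)
    (hRfrac : ∀ x : K, ∃ a ∈ R, ∃ b ∈ R, b ≠ 0 ∧ x = a / b)
    (hRsfrac : ∀ x : K, ∃ a ∈ Rs, ∃ b ∈ Rs, b ≠ 0 ∧ x = a / b) :
    List.TFAE
      [ (∀ s : Set K, IsOpen[adicTopology Rs] s → IsOpen[adicTopology R] s),
        IsOpen[adicTopology R] (Rs : Set K),
        (∃ α : K, α ≠ 0 ∧ ∀ r ∈ R, α * r ∈ Rs),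
        (∀ U ∈ @nhds K (adicTopology Rs) 0, ∃ V ∈ @nhds K (adicTopology Rs) 0,
          ∀ v ∈ V, ∀ b ∈ (R : Set K), v * b ∈ U) ] :=
  statement0_general R Rs hRfrac hRsfrac
end

section
/- Let K be a field and let R and R* be subrings of K with fraction field K, with R ≠ K and R* ≠ K. Then the R-adic topology on K equals the R*-adic topology if and only if there exist α, β ∈ K^× such that α·R ⊆ R* and β·R* ⊆ R. -/
open Topology

/-- The basic set `aT + b`. -/
def seg {K : Type*} [Field K] (T : Subring K) (a b : K) : Set K :=
  {x | ∃ r ∈ T, x = a * r + b}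

lemma seg_mem_basis {K : Type*} [Field K] (T : Subring K) {a : K} (b : K) (ha : a ≠ 0) :
    seg T a b ∈ adicBasis T := ⟨a, b, ha, rfl⟩

lemma mem_seg_self {K : Type*} [Field K] (T : Subring K) (a x : K) : x ∈ seg T a x :=
  ⟨0, T.zero_mem, by ring⟩

lemma seg_shift {K : Type*} [Field K] (T : Subring K) {a b x : K} (hx : x ∈ seg T a b) :
    seg T a x = seg T a b := by
  obtain ⟨r0, hr0, hx⟩ := hx
  ext y
  constructor
  · rintro ⟨r, hr, rfl⟩
    exact ⟨r + r0, T.add_mem hr hr0, by rw [hx]; ring⟩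
  · rintro ⟨r, hr, rfl⟩
    exact ⟨r - r0, T.sub_mem hr hr0, by rw [hx]; ring⟩

lemma seg_subset {K : Type*} [Field K] {T T' : Subring K} {a c : K} (ha : a ≠ 0)
    (h : ∀ r ∈ T, (c / a) * r ∈ T') (x : K) : seg T c x ⊆ seg T' a x := by
  rintro y ⟨r, hr, rfl⟩
  exact ⟨(c / a) * r, h r hr, by field_simp⟩

lemma adic_isBasis {K : Type*} [Field K] (T : Subring K)
    (hfrac : ∀ x : K, ∃ a ∈ T, ∃ b ∈ T, b ≠ 0 ∧ x = a / b) :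
    @TopologicalSpace.IsTopologicalBasis K (adicTopology T) (adicBasis T) := by
  letI := adicTopology T
  refine ⟨?_, ?_, rfl⟩
  · rintro t₁ ⟨a, b, ha, rfl⟩ t₂ ⟨a', b', ha', rfl⟩ x ⟨hx1, hx2⟩
    obtain ⟨p, hp, q, hq, hq0, hpq⟩ := hfrac a
    obtain ⟨p', hp', q', hq', hq0', hpq'⟩ := hfrac a'
    have hp0 : p ≠ 0 := by
      rintro rfl; apply ha; rw [hpq]; simp
    have hp0' : p' ≠ 0 := by
      rintro rfl; apply ha'; rw [hpq']; simp
    have h1 : seg T a x = seg T a b := seg_shift T hx1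
    have h2 : seg T a' x = seg T a' b' := seg_shift T hx2
    refine ⟨seg T (p * p') x, seg_mem_basis T x (mul_ne_zero hp0 hp0'), mem_seg_self T _ x, ?_⟩
    show seg T (p * p') x ⊆ seg T a b ∩ seg T a' b'
    refine Set.subset_inter (h1 ▸ ?_) (h2 ▸ ?_)
    · refine seg_subset ha (fun r hr => ?_) x
      have : p * p' / a = p' * q := by rw [hpq]; field_simp
      rw [this]
      exact T.mul_mem (T.mul_mem hp' hq) hr
    · refine seg_subset ha' (fun r hr => ?_) x
      have : p * p' / a' = p * q' := by rw [hpq']; field_simp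
      rw [this]
      exact T.mul_mem (T.mul_mem hp hq') hr
  · apply Set.eq_univ_of_forall
    intro x
    exact ⟨seg T 1 x, seg_mem_basis T x one_ne_zero, mem_seg_self T 1 x⟩

lemma coe_eq_seg {K : Type*} [Field K] (T : Subring K) : (T : Set K) = seg T 1 0 := by
  ext x
  constructor
  · intro hx; exact ⟨x, hx, by ring⟩
  · rintro ⟨r, hr, rfl⟩; simpa using hr

/-- For subrings `R, R*` of a field `K`, each with fraction field `K` and
different from `K`, the `R`-adic topology equals the `R*`-adic topology if and only if
there are `α, β ∈ K^×` with `αR ⊆ R*` and `βR* ⊆ R`. -/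
theorem statement1 {K : Type*} [Field K] (R Rs : Subring K)
    (hR : R ≠ ⊤) (hRs : Rs ≠ ⊤)
    (hRfrac : ∀ x : K, ∃ a ∈ R, ∃ b ∈ R, b ≠ 0 ∧ x = a / b)
    (hRsfrac : ∀ x : K, ∃ a ∈ Rs, ∃ b ∈ Rs, b ≠ 0 ∧ x = a / b) :
    adicTopology R = adicTopology Rs ↔
      ∃ α β : K, α ≠ 0 ∧ β ≠ 0 ∧ (∀ r ∈ R, α * r ∈ Rs) ∧ (∀ r ∈ Rs, β * r ∈ R) := by
  constructor
  · intro h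
    -- R is open in its own topology, hence in the Rs-topology
    have key : ∀ (T T' : Subring K), adicTopology T = adicTopology T' →
        (∀ x : K, ∃ a ∈ T', ∃ b ∈ T', b ≠ 0 ∧ x = a / b) →
        ∃ β : K, β ≠ 0 ∧ ∀ r ∈ T', β * r ∈ T := by
      intro T T' heq hfrac'
      letI := adicTopology T'
      have hopen : IsOpen[adicTopology T'] (T : Set K) := by
        rw [← heq]
        exact TopologicalSpace.GenerateOpen.basic _ (coe_eq_seg T ▸ seg_mem_basis T 0 one_ne_zero)
      have hb := adic_isBasis T' hfrac'
      obtain ⟨v, ⟨a, b, ha, rfl⟩, h0, hsub⟩ :=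
        hb.exists_subset_of_mem_open (show (0 : K) ∈ (T : Set K) from T.zero_mem) hopen
      refine ⟨a, ha, fun r hr => ?_⟩
      have : seg T' a 0 = seg T' a b := seg_shift T' h0
      have hmem : a * r ∈ seg T' a 0 := ⟨r, hr, by ring⟩
      rw [this] at hmem
      exact hsub hmem
    obtain ⟨β, hβ, hβR⟩ := key R Rs h hRsfrac
    obtain ⟨α, hα, hαR⟩ := key Rs R h.symm hRfrac
    exact ⟨α, β, hα, hβ, hαR, hβR⟩
  · rintro ⟨α, β, hα, hβ, hαR, hβRs⟩
    have key : ∀ (T T' : Subring K) (γ : K), γ ≠ 0 → (∀ r ∈ T', γ * r ∈ T) →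
        adicTopology T' ≤ adicTopology T := by
      intro T T' γ hγ hsub
      letI := adicTopology T'
      apply le_generateFrom
      rintro s ⟨a, b, ha, rfl⟩
      have : {x | ∃ r ∈ T, x = a * r + b} = ⋃ x ∈ seg T a b, seg T' (a * γ) x := by
        ext y
        simp only [Set.mem_iUnion, exists_prop]
        constructor
        · intro hy
          exact ⟨y, hy, mem_seg_self T' _ y⟩
        · rintro ⟨x, hx, hy⟩
          have hs : seg T' (a * γ) x ⊆ seg T a x :=
            seg_subset ha (fun r hr => by
              have : a * γ / a * r = γ * r := by field_simp
              rw [this]; exact hsub r hr) x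
          have := hs hy
          rwa [seg_shift T hx] at this
      rw [this]
      exact isOpen_biUnion fun x _ =>
        TopologicalSpace.GenerateOpen.basic _ (seg_mem_basis T' x (mul_ne_zero ha hγ))
    exact le_antisymm (key Rs R α hα hαR) (key R Rs β hβ hβRs)
end

section
/- Let R be a Noetherian domain with fraction field K, R ≠ K, and let S be a subring of K containing R with S ≠ K. Then S is a finite R-module if and only if the R-adic topology and the S-adic topology on K agree. -/
/-!
Both conditions are equivalent to the existence of a common denominator `d ≠ 0` with
`dS ⊆ R`. On the module side this is the theory of fractional ideals: over a Noetherian domain,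
an `R`-submodule of `K` is finitely generated iff it is fractional. On the topological side,
the translates `x + aR` (`a ≠ 0`) form a neighbourhood basis of `x` for the `R`-adic topology
(this uses `K = Frac R`). As `R ⊆ S`, the `S`-adic topology
is coarser; it is also finer iff `R` is `S`-adically open, i.e. iff `dS ⊆ R` for some `d ≠ 0`.
-/

open Topology

/-- `S` is a finite `R`-module: it is generated, as an `R`-module, by finitely many
elements of `S`. -/
def IsFiniteModuleOver {K : Type*} [Field K] (R S : Subring K) : Prop :=
  ∃ t : Finset K, (↑t : Set K) ⊆ (S : Set K) ∧
    ∀ s ∈ S, ∃ c : K → K, (∀ x ∈ t, c x ∈ R) ∧ s = ∑ x ∈ t, c x * x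

open nonZeroDivisors

theorem Submodule.fg_iff_isFractional {A L : Type*} [CommRing A] [IsDomain A] [IsNoetherianRing A]
    [Field L] [Algebra A L] [IsFractionRing A L] (N : Submodule A L) :
    N.FG ↔ IsFractional A⁰ N :=
  ⟨FractionalIdeal.isFractional_of_fg,
    fun h => FractionalIdeal.fg_of_isNoetherianRing le_rfl ⟨N, h⟩⟩

section

variable {K : Type*} [Field K] {R S : Subring K}

def Subring.toSubmoduleOfLE (hRS : R ≤ S) : Submodule R K where
  carrier := S
  add_mem' := S.add_mem
  zero_mem' := S.zero_mem
  smul_mem' r _ hx := S.mul_mem (hRS r.2) hx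

theorem isFiniteModuleOver_iff_fg (hRS : R ≤ S) :
    IsFiniteModuleOver R S ↔ (Subring.toSubmoduleOfLE hRS).FG := by
  constructor
  · rintro ⟨t, htS, hgen⟩
    refine ⟨t, le_antisymm (Submodule.span_le.mpr htS) fun s hs => ?_⟩
    obtain ⟨c, hcR, rfl⟩ := hgen s hs
    exact Submodule.sum_mem _ fun x hx =>
      Submodule.smul_mem _ (⟨c x, hcR x hx⟩ : R) (Submodule.subset_span hx)
  · rintro ⟨t, ht⟩
    refine ⟨t, fun x hx => (ht ▸ Submodule.subset_span hx : x ∈ Subring.toSubmoduleOfLE hRS),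
      fun s hs => ?_⟩
    obtain ⟨f, -, hf⟩ := Submodule.mem_span_finset.mp (ht.symm ▸ hs : s ∈ Submodule.span R t)
    exact ⟨fun x => f x, fun x _ => (f x).2, hf.symm⟩

theorem isFractional_toSubmoduleOfLE_iff (hRS : R ≤ S) :
    IsFractional R⁰ (Subring.toSubmoduleOfLE hRS) ↔ ∃ d ≠ 0, ∀ s ∈ S, d * s ∈ R := by
  constructor
  · rintro ⟨d, hd, hdS⟩
    refine ⟨d, by simpa using nonZeroDivisors.ne_zero hd, fun s hs => ?_⟩
    obtain ⟨r, hr⟩ := hdS s hs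
    exact (hr ▸ r.2 : d • s ∈ R)
  · rintro ⟨d, hd0, hdS⟩
    have hdR : d ∈ R := by simpa using hdS 1 S.one_mem
    refine ⟨⟨d, hdR⟩, mem_nonZeroDivisors_of_ne_zero (by simpa using hd0), fun s hs => ?_⟩
    exact ⟨⟨d * s, hdS s hs⟩, rfl⟩

theorem isOpen_adicTopology_of_forall_add_mul_mem {s : Set K}
    (h : ∀ x ∈ s, ∃ a ≠ 0, ∀ r ∈ R, x + a * r ∈ s) : IsOpen[adicTopology R] s := by
  let := adicTopology R
  refine isOpen_iff_forall_mem_open.mpr fun x hx => ?_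
  obtain ⟨a, ha, has⟩ := h x hx
  refine ⟨{y | ∃ r ∈ R, y = a * r + x}, ?_,
    TopologicalSpace.isOpen_generateFrom_of_mem ⟨a, x, ha, rfl⟩, ⟨0, R.zero_mem, by ring⟩⟩
  rintro _ ⟨r, hr, rfl⟩
  simpa only [add_comm] using has r hr

theorem exists_add_mul_mem_of_isOpen (hfrac : ∀ x : K, ∃ q ∈ R, q ≠ 0 ∧ q * x ∈ R)
    {s : Set K} (hs : IsOpen[adicTopology R] s) {x : K} (hx : x ∈ s) :
    ∃ a ≠ 0, ∀ r ∈ R, x + a * r ∈ s := by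
  induction hs generalizing x with
  | basic u hu =>
    obtain ⟨a, b, ha, rfl⟩ := hu
    obtain ⟨r₀, hr₀, rfl⟩ := hx
    exact ⟨a, ha, fun r hr => ⟨r₀ + r, R.add_mem hr₀ hr, by ring⟩⟩
  | univ => exact ⟨1, one_ne_zero, fun _ _ => trivial⟩
  | inter u v _ _ ihu ihv =>
    obtain ⟨a, ha, hau⟩ := ihu hx.1
    obtain ⟨b, hb, hbv⟩ := ihv hx.2
    obtain ⟨p, hp, hp0, hpa⟩ := hfrac a⁻¹
    obtain ⟨q, hq, hq0, hqb⟩ := hfrac b⁻¹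
    -- `p ∈ aR` and `q ∈ bR` are nonzero elements of `R`, so `pqR ⊆ aR ∩ bR`
    refine ⟨p * q, mul_ne_zero hp0 hq0, fun r hr => ⟨?_, ?_⟩⟩
    · convert hau (p * a⁻¹ * (q * r)) (R.mul_mem hpa (R.mul_mem hq hr)) using 2
      field_simp
    · convert hbv (q * b⁻¹ * (p * r)) (R.mul_mem hqb (R.mul_mem hp hr)) using 2
      field_simp
  | sUnion 𝒮 _ ih =>
    obtain ⟨u, hu𝒮, hxu⟩ := hx
    obtain ⟨a, ha, hau⟩ := ih u hu𝒮 hxu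
    exact ⟨a, ha, fun r hr => ⟨u, hu𝒮, hau r hr⟩⟩

theorem adicTopology_le_of_le (hRS : R ≤ S) : adicTopology R ≤ adicTopology S := by
  refine le_generateFrom ?_
  rintro _ ⟨a, b, ha, rfl⟩
  refine isOpen_adicTopology_of_forall_add_mul_mem ?_
  rintro _ ⟨s, hs, rfl⟩
  exact ⟨a, ha, fun r hr => ⟨s + r, S.add_mem hs (hRS hr), by ring⟩⟩

theorem adicTopology_le_of_mul_mem {d : K} (hd : d ≠ 0) (hdS : ∀ s ∈ S, d * s ∈ R) :
    adicTopology S ≤ adicTopology R := by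
  refine le_generateFrom ?_
  rintro _ ⟨a, b, ha, rfl⟩
  refine isOpen_adicTopology_of_forall_add_mul_mem ?_
  rintro _ ⟨r, hr, rfl⟩
  exact ⟨a * d, mul_ne_zero ha hd, fun s hs => ⟨r + d * s, R.add_mem hr (hdS s hs), by ring⟩⟩

theorem exists_mul_mem_of_adicTopology_le (hfrac : ∀ x : K, ∃ q ∈ S, q ≠ 0 ∧ q * x ∈ S)
    (h : adicTopology S ≤ adicTopology R) : ∃ d ≠ 0, ∀ s ∈ S, d * s ∈ R := by
  have hR : IsOpen[adicTopology R] (R : Set K) :=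
    isOpen_adicTopology_of_forall_add_mul_mem fun x hx =>
      ⟨1, one_ne_zero, fun r hr => by simpa using R.add_mem hx hr⟩
  simpa using exists_add_mul_mem_of_isOpen hfrac (h _ hR) R.zero_mem

theorem adicTopology_eq_iff (hRS : R ≤ S) (hfrac : ∀ x : K, ∃ q ∈ S, q ≠ 0 ∧ q * x ∈ S) :
    adicTopology R = adicTopology S ↔ ∃ d ≠ 0, ∀ s ∈ S, d * s ∈ R := by
  refine ⟨fun h => exists_mul_mem_of_adicTopology_le hfrac h.ge, ?_⟩
  rintro ⟨d, hd, hdS⟩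
  exact le_antisymm (adicTopology_le_of_le hRS) (adicTopology_le_of_mul_mem hd hdS)

end

theorem statement2_general {K : Type*} [Field K] (R S : Subring K)
    (hNoeth : IsNoetherianRing ↥R)
    (hRS : R ≤ S)
    (hRfrac : ∀ x : K, ∃ a ∈ R, ∃ b ∈ R, b ≠ 0 ∧ x = a / b) :
    IsFiniteModuleOver R S ↔ adicTopology R = adicTopology S := by
  have : IsFractionRing R K := IsFractionRing.of_field R K fun x => by
    obtain ⟨a, ha, b, hb, -, rfl⟩ := hRfrac x
    exact ⟨⟨a, ha⟩, ⟨b, hb⟩, rfl⟩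
  have hSfrac : ∀ x : K, ∃ q ∈ S, q ≠ 0 ∧ q * x ∈ S := fun x => by
    obtain ⟨a, ha, b, hb, hb0, rfl⟩ := hRfrac x
    exact ⟨b, hRS hb, hb0, by simpa [mul_div_cancel₀ a hb0] using hRS ha⟩
  rw [isFiniteModuleOver_iff_fg hRS, Submodule.fg_iff_isFractional,
    isFractional_toSubmoduleOfLE_iff, adicTopology_eq_iff hRS hSfrac]

/-- Let `R` be a Noetherian domain with fraction field `K`, `R ≠ K`, and let
`S` be a subring of `K` containing `R` with `S ≠ K`. Then `S` is a finite `R`-module if and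
only if the `R`-adic and `S`-adic topologies on `K` agree. -/
theorem statement2 {K : Type*} [Field K] (R S : Subring K)
    (hNoeth : IsNoetherianRing ↥R)
    (hR : R ≠ ⊤) (hS : S ≠ ⊤) (hRS : R ≤ S)
    (hRfrac : ∀ x : K, ∃ a ∈ R, ∃ b ∈ R, b ≠ 0 ∧ x = a / b) :
    IsFiniteModuleOver R S ↔ adicTopology R = adicTopology S :=
  statement2_general R S hNoeth hRS hRfrac
end

section
/- Let R be a normal Noetherian local domain with fraction field K and let α ∈ K with α ∉ R. Then there exists a valuation subring 𝒪 of K dominating R such that α ∉ 𝒪. -/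
open IsLocalRing Polynomial


/-- Let `R` be a normal Noetherian local domain with fraction field `K` and
`α ∈ K \ R`. Then there is a valuation subring `𝒪` of `K` dominating `R` (i.e. `R ⊆ 𝒪` and
the maximal ideal of `𝒪` meets `R` in the maximal ideal of `R`; equivalently, an element of
`R` is a unit in `R` iff it is a unit in `𝒪`) with `α ∉ 𝒪`. -/
theorem statement4 {K : Type*} [Field K] (R : Subring K)
    (hLocal : IsLocalRing ↥R)
    (hNoeth : IsNoetherianRing ↥R)
    (hNormal : ∀ x : K, IsIntegral ↥R x → x ∈ R)
    (hRfrac : ∀ x : K, ∃ a ∈ R, ∃ b ∈ R, b ≠ 0 ∧ x = a / b)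
    (α : K) (hα : α ∉ R) :
    ∃ O : ValuationSubring K, α ∉ O ∧
      ∃ hle : ∀ x ∈ R, x ∈ O,
        ∀ (x : K) (hx : x ∈ R),
          (IsUnit (⟨x, hx⟩ : R) ↔ IsUnit (⟨x, hle x hx⟩ : O)) := by
  haveI := hLocal
  have hα0 : α ≠ 0 := fun e ↦ hα (e ▸ R.zero_mem)
  set β : K := α⁻¹ with hβ
  have hβ0 : β ≠ 0 := inv_ne_zero hα0
  set S := Algebra.adjoin ↥R ({β} : Set K) with hSdef
  have hbS : β ∈ S := Algebra.self_mem_adjoin_singleton _ _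
  have hRS : R ≤ S.toSubring := fun r hr ↦ S.algebraMap_mem ⟨r, hr⟩
  set b : ↥S.toSubring := ⟨β, hbS⟩ with hb
  set I : Ideal ↥S.toSubring :=
    (maximalIdeal ↥R).map (algebraMap ↥R ↥S) ⊔ Ideal.span {b} with hI
  -- the ideal is proper
  have hItop : I ≠ ⊤ := by
    intro htop
    have h1 : (1 : ↥S.toSubring) ∈ I := htop ▸ Submodule.mem_top
    rw [hI] at h1
    obtain ⟨y, hy, z, hz, hyz⟩ := Submodule.mem_sup.mp h1
    obtain ⟨c, hc⟩ := Ideal.mem_span_singleton'.mp hz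
    obtain ⟨p, hp, hp'⟩ := (Algebra.mem_ideal_map_adjoin β (maximalIdeal ↥R)).mp hy
    have hcS : (c : K) ∈ (Polynomial.aeval β : Polynomial ↥R →ₐ[↥R] K).range := by
      rw [← Algebra.adjoin_singleton_eq_range_aeval]
      exact (Subalgebra.mem_toSubring).mp c.2
    obtain ⟨q, hq0⟩ := hcS
    have hq : (aeval β) q = (c : K) := hq0
    -- 1 = aeval β (p + X * q) in K
    have h1K : (y : K) + (c : K) * β = 1 := by
      have := congrArg (Subtype.val) hyz
      rw [← hc] at this
      simpa using this
    have key : aeval β (p + X * q) = (1 : K) := by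
      rw [map_add, hp', map_mul, aeval_X, hq, mul_comm, h1K]
    set g : Polynomial ↥R := p + X * q - 1 with hg
    have hg0 : aeval β g = 0 := by rw [map_sub, key, map_one, sub_self]
    have H : IsUnit (g.coeff 0) := by
      by_contra h
      rw [← mem_nonunits_iff, ← mem_maximalIdeal] at h
      have h0 : g.coeff 0 = p.coeff 0 - 1 := by simp [hg]
      have := sub_mem (hp 0) (h0 ▸ h)
      simp at this
    have := IsUnit.invertible (isUnit_iff_ne_zero.mpr hβ0)
    have hrev : aeval (⅟β) g.reverse = 0 := by
      simpa [← Polynomial.aeval_def, hg0] using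
        Polynomial.eval₂_reverse_eq_zero_iff (algebraMap ↥R K) β g
    rw [invOf_eq_right_inv (inv_mul_cancel₀ hα0)] at hrev
    refine hα (hNormal α ⟨.C (H.unit⁻¹).1 * g.reverse, ?_, ?_⟩)
    · have ht : g.natTrailingDegree = 0 :=
        Polynomial.natTrailingDegree_eq_zero.mpr (.inr H.ne_zero)
      rw [Polynomial.Monic.def, Polynomial.leadingCoeff_mul', Polynomial.reverse_leadingCoeff,
        Polynomial.trailingCoeff, ht]
      · simp
      · have hgne : g ≠ 0 := fun e ↦ by simp [e] at H
        simpa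
    · simp [← Polynomial.aeval_def, hrev]
  obtain ⟨M, hMmax, hM⟩ := Ideal.exists_le_maximal I hItop
  haveI := hMmax.isPrime
  set A : LocalSubring K := LocalSubring.ofPrime S.toSubring M with hA
  set R' : LocalSubring K := ⟨R⟩ with hR'
  have h_RleA : R' ≤ A := by
    refine ⟨hRS.trans (LocalSubring.le_ofPrime _ _), ⟨?_⟩⟩
    rintro ⟨a, ha⟩ hu
    have hu' : IsUnit (algebraMap ↥S.toSubring ↥A.toSubring ⟨a, hRS ha⟩) := hu
    have := (IsLocalization.AtPrime.isUnit_to_map_iff ↥A.toSubring M ⟨a, hRS ha⟩).mp hu'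
    by_contra h
    rw [← mem_nonunits_iff, ← mem_maximalIdeal] at h
    exact this (hM (Ideal.mem_sup_left (Ideal.mem_map_of_mem (algebraMap ↥R ↥S) h)))
  have hbM : b ∈ M := hM (Ideal.mem_sup_right (Ideal.subset_span rfl))
  have hbA : ¬ IsUnit (algebraMap ↥S.toSubring ↥A.toSubring b) := by
    intro h
    exact (IsLocalization.AtPrime.isUnit_to_map_iff ↥A.toSubring M b).mp h hbM
  obtain ⟨B, hB⟩ := A.exists_le_valuationSubring
  have h_RleB : R' ≤ B.toLocalSubring := h_RleA.trans hB
  have hβB : β ∈ B := hB.1 (algebraMap ↥S.toSubring ↥A.toSubring b).2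
  have hαB : α ∉ B := by
    intro hαB
    have : IsUnit (⟨β, hβB⟩ : ↥B.toSubring) :=
      isUnit_iff_exists_inv.mpr ⟨⟨α, hαB⟩, Subtype.ext (by simp [hβ, hα0])⟩
    have : IsUnit (Subring.inclusion hB.1 (algebraMap ↥S.toSubring ↥A.toSubring b)) := this
    exact hbA (hB.2.1 _ this)
  refine ⟨B, hαB, fun x hx ↦ h_RleB.1 hx, fun x hx ↦ ⟨?_, ?_⟩⟩
  · intro h
    exact h.map (Subring.inclusion h_RleB.1)
  · intro h
    exact h_RleB.2.1 (⟨x, hx⟩ : ↥R'.toSubring) h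
end

section
/- Fix a prime p. Suppose ∂, ∂* : ℚ_p → ℚ_p are ℚ-derivations (ℚ-linear maps satisfying the Leibniz rule ∂(xy) = x∂y + y∂x) such that neither is a constant multiple of the other, i.e., for every λ ∈ ℚ_p one has λ·∂ ≠ ∂* and λ·∂* ≠ ∂. Then the set {(α, ∂α, ∂*α) : α ∈ ℚ_p} is dense in ℚ_p³ with respect to the product of the p-adic topologies. -/
open Topology

/-! Since `ℚ` is dense in `ℚ_p`, the closure of the `ℚ`-subspace `{(α, ∂α, ∂*α)}` of `ℚ_p³` is a
`ℚ_p`-subspace. If it were proper, some nonzero linear form `a x + b y + c z` would vanish on it.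
Taking `α = 1` gives `a = 0` because `∂1 = ∂*1 = 0`, and then `b ∂ + c ∂* = 0` with `(b, c) ≠ 0`
makes one derivation a multiple of the other. -/

section RatDense

variable {K E : Type*} [Field K] [TopologicalSpace K]
  [AddCommGroup E] [Module K E] [Module ℚ E] [TopologicalSpace E] [ContinuousSMul K E]

theorem Submodule.smul_mem_closure_of_denseRange_ratCast (hℚ : DenseRange ((↑) : ℚ → K))
    (S : Submodule ℚ E) (c : K) {x : E} (hx : x ∈ closure (S : Set E)) :
    c • x ∈ closure (S : Set E) := by
  refine hℚ.induction_on c (isClosed_closure.preimage (continuous_id.smul continuous_const))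
    fun q => map_mem_closure (continuous_const_smul (q : K)) hx fun y hy => ?_
  rw [ratCast_smul_eq K ℚ, Rat.cast_id]
  exact S.smul_mem q hy

variable [ContinuousAdd E]

def Submodule.topologicalClosureOfRat (hℚ : DenseRange ((↑) : ℚ → K)) (S : Submodule ℚ E) :
    Submodule K E where
  toAddSubmonoid := S.toAddSubmonoid.topologicalClosure
  smul_mem' c _ hx := S.smul_mem_closure_of_denseRange_ratCast hℚ c hx

theorem Submodule.coe_topologicalClosureOfRat (hℚ : DenseRange ((↑) : ℚ → K))
    (S : Submodule ℚ E) : (S.topologicalClosureOfRat hℚ : Set E) = closure S :=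
  rfl

end RatDense

theorem eq_zero_and_eq_zero_of_forall_mul_add_mul_eq_zero {X K : Type*} [Field K]
    {u v : X → K} (hu : ∀ lam : K, (fun x => lam * u x) ≠ v)
    (hv : ∀ lam : K, (fun x => lam * v x) ≠ u) {b c : K}
    (h : ∀ x, b * u x + c * v x = 0) : b = 0 ∧ c = 0 := by
  by_cases hb : b = 0
  · refine ⟨hb, by_contra fun hc => hu 0 (funext fun x => ?_)⟩
    have := h x
    rw [hb, zero_mul, zero_add, mul_eq_zero] at this
    simp [this.resolve_left hc]
  · refine (hv (-c / b) (funext fun x => ?_)).elim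
    field_simp
    linear_combination -h x

theorem LinearMap.exists_apply_prod_prod_eq {K : Type*} [CommSemiring K]
    (f : K × K × K →ₗ[K] K) :
    ∃ a b c : K, ∀ x y z : K, f (x, y, z) = x * a + y * b + z * c := by
  refine ⟨f (1, 0, 0), f (0, 1, 0), f (0, 0, 1), fun x y z => ?_⟩
  have : ((x, y, z) : K × K × K) = x • (1, 0, 0) + y • (0, 1, 0) + z • (0, 0, 1) := by simp
  rw [this]
  simp only [map_add, LinearMap.map_smul, smul_eq_mul]

theorem Derivation.eq_zero_of_forall_apply_graph_eq_zero {R K : Type*} [CommRing R] [Field K]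
    [Algebra R K] {d ds : Derivation R K K}
    (h1 : ∀ lam : K, (fun x => lam * d x) ≠ ⇑ds) (h2 : ∀ lam : K, (fun x => lam * ds x) ≠ ⇑d)
    (f : K × K × K →ₗ[K] K) (hf : ∀ α, f (α, d α, ds α) = 0) : f = 0 := by
  obtain ⟨a, b, c, hf_apply⟩ := f.exists_apply_prod_prod_eq
  have ha : a = 0 := by simpa [hf_apply] using hf 1
  obtain ⟨hb, hc⟩ := eq_zero_and_eq_zero_of_forall_mul_add_mul_eq_zero h1 h2 fun x => by
    simpa [hf_apply, ha, mul_comm] using hf x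
  refine LinearMap.ext fun ⟨x, y, z⟩ => ?_
  simp [hf_apply, ha, hb, hc]

theorem Derivation.dense_graph {K : Type*} [Field K] [CharZero K] [TopologicalSpace K]
    [IsTopologicalRing K]
    (hℚ : DenseRange ((↑) : ℚ → K)) {d ds : Derivation ℚ K K}
    (h1 : ∀ lam : K, (fun x => lam * d x) ≠ ⇑ds) (h2 : ∀ lam : K, (fun x => lam * ds x) ≠ ⇑d) :
    Dense {q : K × K × K | ∃ α : K, q = (α, d α, ds α)} := by
  let G : Submodule ℚ (K × K × K) :=
    LinearMap.range (LinearMap.id.prod (d.toLinearMap.prod ds.toLinearMap))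
  have hG : (G : Set (K × K × K)) = {q | ∃ α : K, q = (α, d α, ds α)} := by
    ext; simp [G, eq_comm]
  rw [← hG, dense_iff_closure_eq, ← Submodule.coe_topologicalClosureOfRat hℚ,
    Submodule.coe_eq_univ]
  by_contra hV
  obtain ⟨f, hf0, hf⟩ := Submodule.exists_dual_map_eq_bot_of_lt_top (Ne.lt_top hV) inferInstance
  refine hf0 (Derivation.eq_zero_of_forall_apply_graph_eq_zero h1 h2 f fun α => ?_)
  have hα : (α, d α, ds α) ∈ G.topologicalClosureOfRat hℚ := by
    rw [← SetLike.mem_coe, Submodule.coe_topologicalClosureOfRat]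
    exact subset_closure ⟨α, rfl⟩
  simpa [hf] using Submodule.mem_map_of_mem (f := f) hα

/-- If `∂, ∂* : ℚ_p → ℚ_p` are `ℚ`-derivations such that neither is a constant
multiple of the other, then `{(α, ∂α, ∂*α) : α ∈ ℚ_p}` is dense in `ℚ_p³` (with the product
of the `p`-adic topologies). -/
theorem statement5 (p : ℕ) [Fact p.Prime]
    (d ds : Derivation ℚ ℚ_[p] ℚ_[p])
    (h1 : ∀ lam : ℚ_[p], (fun x => lam * d x) ≠ ⇑ds)
    (h2 : ∀ lam : ℚ_[p], (fun x => lam * ds x) ≠ ⇑d) :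
    Dense {q : ℚ_[p] × ℚ_[p] × ℚ_[p] | ∃ α : ℚ_[p], q = (α, d α, ds α)} :=
  Derivation.dense_graph (Padic.denseRange_ratCast p) h1 h2
end

section
/- Fix a prime p. Suppose ∂, ∂* : ℚ_p → ℚ_p are nonzero ℚ-derivations such that neither is a constant multiple of the other, i.e., for every λ ∈ ℚ_p one has λ·∂ ≠ ∂* and λ·∂* ≠ ∂. Let E_∂ = {α ∈ ℤ_p : ∂α ∈ ℤ_p} and E_{∂*} = {α ∈ ℤ_p : ∂*α ∈ ℤ_p}. Then for every a ∈ ℚ_p^× one has a·E_{∂*} ⊄ E_∂ and a·E_∂ ⊄ E_{∂*}; consequently neither the E_∂-adic topology on ℚ_p refines the E_{∂*}-adic topology nor vice versa. -/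
open Topology

/-- `E_∂ = {α ∈ ℤ_p : ∂α ∈ ℤ_p}`, as a subring of `ℚ_p` (membership in `ℤ_p` being
expressed by the norm being at most `1`). -/
def Eder (p : ℕ) [Fact p.Prime] (d : Derivation ℚ ℚ_[p] ℚ_[p]) : Subring ℚ_[p] where
  carrier := {α : ℚ_[p] | ‖α‖ ≤ 1 ∧ ‖d α‖ ≤ 1}
  zero_mem' := by simp
  one_mem' := by simp
  add_mem' := by
    rintro a b ⟨ha1, ha2⟩ ⟨hb1, hb2⟩
    refine ⟨le_trans (Padic.nonarchimedean a b) (max_le ha1 hb1), ?_⟩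
    rw [map_add]
    exact le_trans (Padic.nonarchimedean _ _) (max_le ha2 hb2)
  neg_mem' := by
    rintro a ⟨h1, h2⟩
    refine ⟨by simpa using h1, ?_⟩
    rw [map_neg]
    simpa using h2
  mul_mem' := by
    rintro a b ⟨ha1, ha2⟩ ⟨hb1, hb2⟩
    refine ⟨?_, ?_⟩
    · rw [norm_mul]
      exact mul_le_one₀ ha1 (norm_nonneg _) hb1
    · rw [Derivation.leibniz, smul_eq_mul, smul_eq_mul]
      refine le_trans (Padic.nonarchimedean _ _) (max_le ?_ ?_)
      · rw [norm_mul]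
        exact mul_le_one₀ ha1 (norm_nonneg _) hb2
      · rw [norm_mul]
        exact mul_le_one₀ hb1 (norm_nonneg _) ha2

/-!
If `∂, ∂*` are not proportional, their Wronskian `∂x · ∂*y - ∂y · ∂*x` is nonzero at some `x, y`.
On `ℚ + ℚx + ℚy` the map `β ↦ (β, ∂β, ∂*β)` is then an invertible linear map applied to the dense
set `ℚ³`, so there are `α ∈ E_{∂*}` with `∂α` arbitrarily large. Since `∂(aα) = a ∂α + α ∂a`,
such an `α` has `aα ∉ E_∂`.

Because `ℚ_p` is the fraction field of `E_∂`, any two sets `c₁E_∂, c₂E_∂` contain a common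
`cE_∂`, so every open set of the `E_∂`-adic topology contains some `cE_∂ + x` around each of its
points. Were the `E_∂`-adic topology finer than the `E_{∂*}`-adic one, the open set `E_{∂*}`
would contain some `cE_∂`.
-/

lemma exists_mul_ne_mul_of_forall_mul_ne {α K : Type*} [Field K] {f g : α → K} (hg : g ≠ 0)
    (h : ∀ lam : K, (fun x => lam * g x) ≠ f) : ∃ x y, f x * g y ≠ f y * g x := by
  obtain ⟨y, hy : g y ≠ 0⟩ := Function.ne_iff.1 hg
  by_contra! hfg
  refine h (f y / g y) (funext fun x => ?_)
  field_simp
  linear_combination -hfg x y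

section Derivation

variable {K : Type*} [Field K] [CharZero K]

lemma Derivation.map_ratCast (d : Derivation ℚ K K) (q : ℚ) : d q = 0 := by
  simpa using d.map_algebraMap q

lemma Derivation.map_ratCast_mul (d : Derivation ℚ K K) (q : ℚ) (x : K) : d (q * x) = q * d x := by
  simp [Derivation.leibniz, d.map_ratCast]

variable [TopologicalSpace K] [IsTopologicalRing K]

lemma dense_range_derivation_pair_of_mul_ne_mul (hℚ : DenseRange ((↑) : ℚ → K))
    {d₁ d₂ : Derivation ℚ K K} {x y : K} (hxy : d₁ x * d₂ y ≠ d₁ y * d₂ x) :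
    Dense (Set.range fun β : K => (β, d₁ β, d₂ β)) := by
  have hδ : d₁ x * d₂ y - d₁ y * d₂ x ≠ 0 := sub_ne_zero.2 hxy
  let L : K × K × K → K × K × K := fun v =>
    (v.1 + v.2.1 * x + v.2.2 * y, v.2.1 * d₁ x + v.2.2 * d₁ y, v.2.1 * d₂ x + v.2.2 * d₂ y)
  have hL : Function.Surjective L := by
    rintro ⟨u, v, w⟩
    set b := (v * d₂ y - w * d₁ y) / (d₁ x * d₂ y - d₁ y * d₂ x)
    set c := (w * d₁ x - v * d₂ x) / (d₁ x * d₂ y - d₁ y * d₂ x)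
    refine ⟨(u - b * x - c * y, b, c), ?_⟩
    simp only [L, b, c, Prod.mk.injEq]
    refine ⟨by ring, ?_, ?_⟩ <;>
      rw [div_mul_eq_mul_div, div_mul_eq_mul_div, ← add_div, div_eq_iff hδ] <;> ring
  have hdense : DenseRange (L ∘ Prod.map ((↑) : ℚ → K) (Prod.map ((↑) : ℚ → K) ((↑) : ℚ → K))) :=
    hL.denseRange.comp (hℚ.prodMap (hℚ.prodMap hℚ)) (by fun_prop)
  refine hdense.mono ?_
  rintro _ ⟨⟨a, b, c⟩, rfl⟩
  refine ⟨a + b * x + c * y, ?_⟩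
  simp [L, Derivation.map_ratCast]

end Derivation

section AdicTopology

variable {K : Type*} [Field K] {R : Subring K}

lemma isOpen_adicTopology_coe (R : Subring K) : IsOpen[adicTopology R] (R : Set K) :=
  TopologicalSpace.GenerateOpen.basic _ ⟨1, 0, one_ne_zero, by ext; simp⟩

lemma exists_common_multiple (hR : ∀ z : K, ∃ r ∈ R, r ≠ 0 ∧ r * z ∈ R) (c₁ c₂ : K) :
    ∃ c ≠ 0, c * c₁⁻¹ ∈ R ∧ c * c₂⁻¹ ∈ R := by
  obtain ⟨r₁, hr₁, hr₁0, hr₁c⟩ := hR c₁⁻¹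
  obtain ⟨r₂, hr₂, hr₂0, hr₂c⟩ := hR c₂⁻¹
  refine ⟨r₁ * r₂, mul_ne_zero hr₁0 hr₂0, ?_, ?_⟩
  · simpa only [mul_right_comm] using R.mul_mem hr₁c hr₂
  · simpa only [mul_assoc] using R.mul_mem hr₁ hr₂c

lemma exists_mul_add_mem_of_isOpen_adicTopology (hR : ∀ z : K, ∃ r ∈ R, r ≠ 0 ∧ r * z ∈ R)
    {s : Set K} (hs : IsOpen[adicTopology R] s) {x : K} (hx : x ∈ s) :
    ∃ c ≠ 0, ∀ r ∈ R, c * r + x ∈ s := by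
  induction hs generalizing x with
  | basic u hu =>
    obtain ⟨a, b, ha, rfl⟩ := hu
    obtain ⟨r₀, hr₀, rfl⟩ := hx
    exact ⟨a, ha, fun r hr => ⟨r + r₀, R.add_mem hr hr₀, by ring⟩⟩
  | univ => exact ⟨1, one_ne_zero, fun _ _ => trivial⟩
  | inter u v _ _ ihu ihv =>
    obtain ⟨c₁, hc₁, hu⟩ := ihu hx.1
    obtain ⟨c₂, hc₂, hv⟩ := ihv hx.2
    obtain ⟨c, hc, h₁, h₂⟩ := exists_common_multiple hR c₁ c₂
    refine ⟨c, hc, fun r hr => ⟨?_, ?_⟩⟩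
    · simpa only [mul_assoc, mul_left_comm c₁, inv_mul_cancel_left₀ hc₁]
        using hu _ (R.mul_mem h₁ hr)
    · simpa only [mul_assoc, mul_left_comm c₂, inv_mul_cancel_left₀ hc₂]
        using hv _ (R.mul_mem h₂ hr)
  | sUnion S _ ih =>
    obtain ⟨u, huS, hxu⟩ := hx
    obtain ⟨c, hc, h⟩ := ih u huS hxu
    exact ⟨c, hc, fun r hr => ⟨u, huS, h r hr⟩⟩

lemma exists_image_mul_subset_of_adicTopology_le {S : Subring K}
    (hR : ∀ z : K, ∃ r ∈ R, r ≠ 0 ∧ r * z ∈ R)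
    (h : ∀ s : Set K, IsOpen[adicTopology S] s → IsOpen[adicTopology R] s) :
    ∃ c ≠ 0, (fun x => c * x) '' (R : Set K) ⊆ S := by
  obtain ⟨c, hc, hcS⟩ :=
    exists_mul_add_mem_of_isOpen_adicTopology hR (h _ (isOpen_adicTopology_coe S)) S.zero_mem
  exact ⟨c, hc, Set.image_subset_iff.2 fun r hr => by simpa using hcS r hr⟩

end AdicTopology

section Eder

variable {p : ℕ} [Fact p.Prime]

lemma exists_mul_mem_Eder (d : Derivation ℚ ℚ_[p] ℚ_[p]) (z : ℚ_[p]) :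
    ∃ r ∈ Eder p d, r ≠ 0 ∧ r * z ∈ Eder p d := by
  set M := max ‖z‖ ‖d z‖
  obtain ⟨N, hN⟩ := exists_pow_lt_of_lt_one (inv_pos.2 (by positivity : (0 : ℝ) < M + 1))
    (Padic.norm_p_lt_one (p := p))
  set q : ℚ := (p : ℚ) ^ N
  have hq : ‖(q : ℚ_[p])‖ * (M + 1) < 1 := by
    rw [Rat.cast_pow, Rat.cast_natCast, norm_pow]
    calc _ < (M + 1)⁻¹ * (M + 1) := by gcongr
      _ = 1 := inv_mul_cancel₀ (by positivity)
  have hsmall : ∀ w : ℚ_[p], ‖w‖ ≤ M → ‖(q : ℚ_[p]) * w‖ ≤ 1 := fun w hw => by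
    rw [norm_mul]
    nlinarith [norm_nonneg (q : ℚ_[p]), norm_nonneg w]
  refine ⟨q, ⟨?_, by simp [Derivation.map_ratCast]⟩, by simp [q, (Fact.out : p.Prime).ne_zero],
    hsmall z (le_max_left _ _), ?_⟩
  · nlinarith [norm_nonneg (q : ℚ_[p]), norm_nonneg z, le_max_left ‖z‖ ‖d z‖]
  · rw [Derivation.map_ratCast_mul]
    exact hsmall _ (le_max_right _ _)

lemma exists_mem_Eder_lt_norm {d₁ d₂ : Derivation ℚ ℚ_[p] ℚ_[p]} {x y : ℚ_[p]}
    (hxy : d₁ x * d₂ y ≠ d₁ y * d₂ x) (C : ℝ) : ∃ α ∈ Eder p d₂, C < ‖d₁ α‖ := by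
  obtain ⟨t, ht⟩ := NormedField.exists_lt_norm ℚ_[p] C
  let U : Set (ℚ_[p] × ℚ_[p] × ℚ_[p]) :=
    {v | ‖v.1‖ < 1} ∩ ({v | C < ‖v.2.1‖} ∩ {v | ‖v.2.2‖ < 1})
  have hU : IsOpen U := by
    refine (isOpen_lt ?_ ?_).inter ((isOpen_lt ?_ ?_).inter (isOpen_lt ?_ ?_)) <;> fun_prop
  have hdense := dense_range_derivation_pair_of_mul_ne_mul (Padic.denseRange_ratCast p) hxy
  obtain ⟨_, ⟨hα, hdα₁, hdα₂⟩, α, rfl⟩ :=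
    hdense.inter_open_nonempty U hU ⟨(0, t, 0), by simp [U, ht]⟩
  exact ⟨α, ⟨hα.le, hdα₂.le⟩, hdα₁⟩

lemma image_mul_Eder_not_subset {d₁ d₂ : Derivation ℚ ℚ_[p] ℚ_[p]} {x y : ℚ_[p]}
    (hxy : d₁ x * d₂ y ≠ d₁ y * d₂ x) {a : ℚ_[p]} (ha : a ≠ 0) :
    ¬ (fun x => a * x) '' (Eder p d₂ : Set ℚ_[p]) ⊆ Eder p d₁ := by
  intro hsub
  obtain ⟨α, hα, hlt⟩ := exists_mem_Eder_lt_norm hxy ((1 + ‖d₁ a‖) / ‖a‖)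
  have haα : a * α ∈ Eder p d₁ := hsub ⟨α, hα, rfl⟩
  have hbound : ‖a‖ * ‖d₁ α‖ ≤ 1 + ‖d₁ a‖ :=
    calc ‖a‖ * ‖d₁ α‖ = ‖d₁ (a * α) - α * d₁ a‖ := by
          rw [Derivation.leibniz, smul_eq_mul, smul_eq_mul, add_sub_cancel_right, norm_mul]
      _ ≤ ‖d₁ (a * α)‖ + ‖α‖ * ‖d₁ a‖ := (norm_sub_le _ _).trans_eq (by rw [norm_mul])
      _ ≤ 1 + ‖d₁ a‖ := add_le_add haα.2 (mul_le_of_le_one_left (norm_nonneg _) hα.1)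
  rw [div_lt_iff₀' (norm_pos_iff.2 ha)] at hlt
  linarith

end Eder

theorem statement6_general (p : ℕ) [Fact p.Prime]
    (d ds : Derivation ℚ ℚ_[p] ℚ_[p]) (hds : ds ≠ 0)
    (h2 : ∀ lam : ℚ_[p], (fun x => lam * ds x) ≠ ⇑d) :
    (∀ a : ℚ_[p], a ≠ 0 →
      ¬ ((fun x => a * x) '' (Eder p ds : Set ℚ_[p]) ⊆ (Eder p d : Set ℚ_[p])) ∧
      ¬ ((fun x => a * x) '' (Eder p d : Set ℚ_[p]) ⊆ (Eder p ds : Set ℚ_[p]))) ∧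
    ¬ (∀ s : Set ℚ_[p],
        IsOpen[adicTopology (Eder p ds)] s → IsOpen[adicTopology (Eder p d)] s) ∧
    ¬ (∀ s : Set ℚ_[p],
        IsOpen[adicTopology (Eder p d)] s → IsOpen[adicTopology (Eder p ds)] s) := by
  obtain ⟨x, y, hxy⟩ := exists_mul_ne_mul_of_forall_mul_ne (DFunLike.coe_injective.ne hds) h2
  have hyx : ds x * d y ≠ ds y * d x := by
    rwa [ne_comm, mul_comm (d y), mul_comm (d x)] at hxy
  have hsub : ∀ a : ℚ_[p], a ≠ 0 →
      ¬ ((fun x => a * x) '' (Eder p ds : Set ℚ_[p]) ⊆ (Eder p d : Set ℚ_[p])) ∧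
      ¬ ((fun x => a * x) '' (Eder p d : Set ℚ_[p]) ⊆ (Eder p ds : Set ℚ_[p])) :=
    fun a ha => ⟨image_mul_Eder_not_subset hxy ha, image_mul_Eder_not_subset hyx ha⟩
  refine ⟨hsub, fun h => ?_, fun h => ?_⟩
  · obtain ⟨c, hc, hcE⟩ := exists_image_mul_subset_of_adicTopology_le (exists_mul_mem_Eder d) h
    exact (hsub c hc).2 hcE
  · obtain ⟨c, hc, hcE⟩ := exists_image_mul_subset_of_adicTopology_le (exists_mul_mem_Eder ds) h
    exact (hsub c hc).1 hcE

/-- If `∂, ∂* : ℚ_p → ℚ_p` are nonzero `ℚ`-derivations, neither a constant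
multiple of the other, then for every `a ∈ ℚ_p^×` we have `a·E_{∂*} ⊄ E_∂` and
`a·E_∂ ⊄ E_{∂*}`; consequently neither of the `E_∂`-adic and `E_{∂*}`-adic topologies on
`ℚ_p` refines the other. -/
theorem statement6 (p : ℕ) [Fact p.Prime]
    (d ds : Derivation ℚ ℚ_[p] ℚ_[p]) (hd : d ≠ 0) (hds : ds ≠ 0)
    (h1 : ∀ lam : ℚ_[p], (fun x => lam * d x) ≠ ⇑ds)
    (h2 : ∀ lam : ℚ_[p], (fun x => lam * ds x) ≠ ⇑d) :
    (∀ a : ℚ_[p], a ≠ 0 →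
      ¬ ((fun x => a * x) '' (Eder p ds : Set ℚ_[p]) ⊆ (Eder p d : Set ℚ_[p])) ∧
      ¬ ((fun x => a * x) '' (Eder p d : Set ℚ_[p]) ⊆ (Eder p ds : Set ℚ_[p]))) ∧
    ¬ (∀ s : Set ℚ_[p],
        IsOpen[adicTopology (Eder p ds)] s → IsOpen[adicTopology (Eder p d)] s) ∧
    ¬ (∀ s : Set ℚ_[p],
        IsOpen[adicTopology (Eder p d)] s → IsOpen[adicTopology (Eder p ds)] s) :=
  statement6_general p d ds hds h2
end

section
/- Let R be a henselian local domain with fraction field K and R ≠ K. Then the R-adic topology on K is gt-henselian; explicitly, for every α ∈ K^× there exists β ∈ K^× such that for every n ≥ 1 and all a₀, …, a_{n−1} ∈ β·R, the polynomial X^{n+1} + X^n + a_{n−1}X^{n−1} + … + a₁X + a₀ has a root in −1 + α·R. -/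
open Topology

open Polynomial

theorem aux_isUnit_add {S : Type*} [CommRing S] [IsLocalRing S] {v z : S}
    (hv : IsUnit v) (hz : z ∈ IsLocalRing.maximalIdeal S) : IsUnit (v + z) := by
  by_contra h
  have hm : v + z ∈ IsLocalRing.maximalIdeal S := h
  have : v ∈ IsLocalRing.maximalIdeal S := by
    have := Ideal.sub_mem _ hm hz
    simpa using this
  exact (IsLocalRing.mem_maximalIdeal v).mp this hv


/-- Let `R` be a henselian local domain with fraction field `K`, `R ≠ K`.
Then the `R`-adic topology on `K` is gt-henselian: for every `α ∈ K^×` there is `β ∈ K^×`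
such that for every `n ≥ 1` and all `a₀, …, a_{n−1} ∈ βR`, the polynomial
`X^{n+1} + X^n + a_{n−1}X^{n−1} + … + a₁X + a₀` has a root in `−1 + αR`. -/
theorem statement9 {K : Type*} [Field K] (R : Subring K)
    (hR : R ≠ ⊤)
    (hHens : HenselianLocalRing ↥R)
    (hRfrac : ∀ x : K, ∃ a ∈ R, ∃ b ∈ R, b ≠ 0 ∧ x = a / b) :
    ∀ α : K, α ≠ 0 → ∃ β : K, β ≠ 0 ∧
      ∀ n : ℕ, 1 ≤ n → ∀ a : ℕ → K, (∀ i < n, ∃ r ∈ R, a i = β * r) →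
        ∃ x : K, (∃ r ∈ R, x = -1 + α * r) ∧
          x ^ (n + 1) + x ^ n + ∑ i ∈ Finset.range n, a i * x ^ i = 0 := by
  classical
  -- find a nonzero nonunit of R
  obtain ⟨x0, hx0⟩ : ∃ x : K, x ∉ R := by
    by_contra h
    push_neg at h
    exact hR ((Subring.eq_top_iff' R).mpr h)
  obtain ⟨a0, ha0, b0, hb0, hb0ne, hx0eq⟩ := hRfrac x0
  set T : ↥R := ⟨b0, hb0⟩ with hT
  have hTm : T ∈ IsLocalRing.maximalIdeal ↥R := by
    rw [IsLocalRing.mem_maximalIdeal, mem_nonunits_iff]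
    intro hu
    obtain ⟨u, hu'⟩ := hu
    apply hx0
    have hinv : (b0 : K)⁻¹ ∈ R := by
      have h1 : ((u⁻¹ : (↥R)ˣ) : ↥R) * T = 1 := by rw [← hu']; exact u.inv_mul
      have h2 : (((u⁻¹ : (↥R)ˣ) : ↥R) : K) * b0 = 1 := by
        simpa using congrArg (Subtype.val) h1
      rw [← eq_inv_of_mul_eq_one_left h2]
      exact Subtype.coe_prop _
    rw [hx0eq, div_eq_mul_inv]
    exact R.mul_mem ha0 hinv
  intro α hα
  obtain ⟨num, hnumR, den, hdenR, hdenne, hαeq⟩ := hRfrac α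
  have hnumne : num ≠ 0 := by
    intro h; apply hα; rw [hαeq, h, zero_div]
  set N : ↥R := ⟨num, hnumR⟩ with hN
  set B : ↥R := N * T with hB
  have hBeq : (B : K) = num * b0 := rfl
  refine ⟨(B : K), by simpa [hBeq] using mul_ne_zero hnumne hb0ne, ?_⟩
  intro n hn a ha
  have ha' : ∀ i : ℕ, ∃ r : ↥R, (i < n → a i = (B : K) * r) := by
    intro i
    by_cases h : i < n
    · obtain ⟨r, hrR, hr⟩ := ha i h
      exact ⟨⟨r, hrR⟩, fun _ => hr⟩
    · exact ⟨0, fun h' => absurd h' h⟩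
  choose ρ hρ using ha'
  set f : Polynomial ↥R :=
    X ^ (n + 1) + (X ^ n + ∑ i ∈ Finset.range n, C (B * ρ i) * X ^ i) with hf
  have hmonic : f.Monic := by
    apply monic_X_pow_add
    have h1 : (X ^ n + ∑ i ∈ Finset.range n, C (B * ρ i) * X ^ i : Polynomial ↥R).degree
        ≤ (n : WithBot ℕ) := by
      apply le_trans (degree_add_le _ _)
      apply max_le (degree_X_pow_le n)
      apply le_trans (degree_sum_le _ _)
      apply Finset.sup_le
      intro i hi
      exact le_trans (degree_C_mul_X_pow_le _ _)
        (by exact_mod_cast Nat.le_of_lt (Finset.mem_range.mp hi))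
    exact lt_of_le_of_lt h1 (by exact_mod_cast Nat.lt_succ_self n)
  -- value at -1
  set S : ↥R := ∑ i ∈ Finset.range n, ρ i * (-1) ^ i with hS
  have heval : f.eval (-1) = B * S := by
    simp only [hf, hS, eval_add, eval_pow, eval_X, eval_finset_sum, eval_mul, eval_C,
      Finset.mul_sum]
    rw [pow_succ, mul_neg_one, neg_add_cancel_left]
    exact Finset.sum_congr rfl fun i _ => by ring
  have hevalm : f.eval (-1) ∈ IsLocalRing.maximalIdeal ↥R := by
    rw [heval, hB]
    exact Ideal.mul_mem_right _ _ (Ideal.mul_mem_left _ _ hTm)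
  -- derivative at -1
  obtain ⟨m, rfl⟩ : ∃ m, n = m + 1 := ⟨n - 1, (Nat.succ_pred_eq_of_pos hn).symm⟩
  have hder : f.derivative.eval (-1)
      = (-1) ^ (m + 1) + ∑ x ∈ Finset.range (m + 1),
          B * ρ x * ((x : ↥R) * (-1) ^ (x - 1)) := by
    simp only [hf, derivative_add, derivative_X_pow, derivative_sum, derivative_C_mul,
      eval_add, eval_mul, eval_pow, eval_natCast, eval_finset_sum, eval_C, eval_X,
      Nat.add_sub_cancel]
    push_cast
    rw [pow_succ]
    ring
  have hdu : IsUnit (f.derivative.eval (-1)) := by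
    rw [hder]
    refine aux_isUnit_add (IsUnit.pow _ isUnit_one.neg) (Ideal.sum_mem _ fun i _ => ?_)
    rw [hB]
    exact Ideal.mul_mem_right _ _ (Ideal.mul_mem_right _ _ (Ideal.mul_mem_left _ _ hTm))
  obtain ⟨x, hroot, hxm⟩ := hHens.is_henselian f hmonic (-1) hevalm hdu
  rw [sub_neg_eq_add] at hxm
  -- factor f - C (f.eval (-1)) = (X - C (-1)) * g
  obtain ⟨g, hg⟩ := X_sub_C_dvd_sub_C_eval (a := (-1 : ↥R)) (p := f)
  have hgder : f.derivative.eval (-1) = g.eval (-1) := by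
    have h1 := congrArg Polynomial.derivative hg
    rw [derivative_sub, derivative_C, sub_zero, derivative_mul, derivative_sub,
      derivative_X, derivative_C, sub_zero, one_mul] at h1
    have h2 := congrArg (Polynomial.eval (-1 : ↥R)) h1
    simpa using h2
  have hgu : IsUnit (g.eval x) := by
    have hdvd : x - (-1) ∣ g.eval x - g.eval (-1) := sub_dvd_eval_sub _ _ _
    obtain ⟨c, hc⟩ := hdvd
    rw [sub_neg_eq_add] at hc
    have hmem : g.eval x - g.eval (-1) ∈ IsLocalRing.maximalIdeal ↥R := by
      rw [hc]; exact Ideal.mul_mem_right _ _ hxm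
    have := aux_isUnit_add (hgder ▸ hdu) hmem
    simpa using this
  obtain ⟨u, hu⟩ := hgu
  -- main identity: x + 1 = -(f.eval (-1)) * u⁻¹
  have hkey : x + 1 = -(B * S) * ((u⁻¹ : (↥R)ˣ) : ↥R) := by
    have h1 := congrArg (Polynomial.eval x) hg
    rw [eval_sub, eval_C, eval_mul, eval_sub, eval_X, eval_C, hroot.eq_zero, zero_sub,
      sub_neg_eq_add] at h1
    rw [← heval, h1, ← hu, mul_assoc, Units.mul_inv, mul_one]
  -- conclude
  set w : ↥R := -S * ((u⁻¹ : (↥R)ˣ) : ↥R) with hw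
  refine ⟨(x : K), ⟨(den * b0 * w : K), ?_, ?_⟩, ?_⟩
  · exact R.mul_mem (R.mul_mem hdenR hb0) (Subtype.coe_prop w)
  · have h1 : (x : K) + 1 = (B : K) * w := by
      have := congrArg (Subtype.val) hkey
      push_cast at this
      rw [this, hw]
      push_cast
      ring
    have h2 : α * (den * b0 * (w : K)) = (B : K) * w := by
      rw [hαeq, hBeq]
      field_simp
    rw [h2, ← h1]
    ring
  · have h0 := congrArg (Subtype.val) hroot.eq_zero
    have h1 : (x : K) ^ (m + 1 + 1) + (x : K) ^ (m + 1)
        + ∑ i ∈ Finset.range (m + 1), ((B : K) * (ρ i : K)) * (x : K) ^ i = 0 := by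
      simp only [hf, eval_add, eval_pow, eval_X, eval_finset_sum, eval_mul, eval_C] at h0
      push_cast at h0
      rw [← h0]
      ring
    rw [← h1]
    congr 1
    apply Finset.sum_congr rfl
    intro i hi
    rw [hρ i (Finset.mem_range.mp hi)]
end

section
/- Let R be a henselian local domain and let α be a non-unit element of R. Then for every n ≥ 1 and all a₀, …, a_{n−1} ∈ α·R, the polynomial X^{n+1} + X^n + a_{n−1}X^{n−1} + … + a₁X + a₀ has a root in −1 + α·R. -/
open Polynomial

/-- Let `R` be a henselian local domain and `α ∈ R` a non-unit. Then for every
`n ≥ 1` and all `a₀, …, a_{n−1} ∈ αR`, the polynomial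
`X^{n+1} + X^n + a_{n−1}X^{n−1} + … + a₁X + a₀` has a root in `−1 + αR`. -/
theorem statement10 {R : Type*} [CommRing R] [IsDomain R] [HenselianLocalRing R]
    (α : R) (hα : ¬ IsUnit α) :
    ∀ n : ℕ, 1 ≤ n → ∀ a : ℕ → R, (∀ i < n, ∃ r : R, a i = α * r) →
      ∃ x : R, (∃ r : R, x = -1 + α * r) ∧
        x ^ (n + 1) + x ^ n + ∑ i ∈ Finset.range n, a i * x ^ i = 0 := by
  intro n hn a ha
  obtain ⟨m, rfl⟩ : ∃ m, n = m + 1 := ⟨n - 1, (Nat.succ_pred_eq_of_pos hn).symm⟩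
  set n := m + 1 with hmn
  -- choose witnesses
  set r : ℕ → R := fun i => if h : i < n then (ha i h).choose else 0 with hrdef
  have hr : ∀ i < n, a i = α * r i := by
    intro i hi
    simp only [hrdef, dif_pos hi]
    exact (ha i hi).choose_spec
  have hαm : α ∈ IsLocalRing.maximalIdeal R := hα
  -- the polynomial
  set f : R[X] := X ^ (n + 1) + (X ^ n + ∑ i ∈ Finset.range n, C (a i) * X ^ i) with hf
  have hfeval : ∀ x : R, f.eval x = x ^ (n + 1) + x ^ n + ∑ i ∈ Finset.range n, a i * x ^ i := by
    intro x
    simp [hf, eval_finset_sum, add_assoc]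
  -- f is monic
  have hmonic : f.Monic := by
    apply (monic_X_pow (n + 1)).add_of_left
    rw [degree_X_pow]
    refine lt_of_le_of_lt (degree_add_le _ _) (max_lt ?_ ?_)
    · rw [degree_X_pow]; exact_mod_cast Nat.lt_succ_self n
    · refine lt_of_le_of_lt (degree_sum_le _ _) ?_
      refine (Finset.sup_lt_iff ?_).mpr ?_
      · exact WithBot.bot_lt_coe _
      · intro i hi
        refine lt_of_le_of_lt (degree_C_mul_X_pow_le _ _) ?_
        exact_mod_cast Nat.lt_succ_of_lt (Finset.mem_range.mp hi)
  -- f(-1) ∈ m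
  have heval1 : f.eval (-1) = α * ∑ i ∈ Finset.range n, r i * (-1) ^ i := by
    rw [hfeval]
    have hs : ∑ i ∈ Finset.range n, a i * (-1 : R) ^ i
        = α * ∑ i ∈ Finset.range n, r i * (-1) ^ i := by
      rw [Finset.mul_sum]
      apply Finset.sum_congr rfl
      intro i hi
      rw [hr i (Finset.mem_range.mp hi), mul_assoc]
    rw [hs, pow_succ]
    ring
  have h1 : f.eval (-1) ∈ IsLocalRing.maximalIdeal R := by
    rw [heval1]
    exact Ideal.mul_mem_right _ _ hαm
  -- f'(-1) is a unit
  have hder : f.derivative.eval (-1)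
      = (-1) ^ n + α * ∑ i ∈ Finset.range n, r i * (i * (-1) ^ (i - 1)) := by
    have hd : f.derivative.eval (-1)
        = ((n:R)+1) * (-1)^n + ((n:R) * (-1)^m
            + ∑ i ∈ Finset.range n, a i * ((i:R) * (-1)^(i-1))) := by
      simp [hf, derivative_sum, derivative_X_pow, derivative_C_mul, hmn, eval_finset_sum]
    have hsum : ∑ i ∈ Finset.range n, a i * ((i : R) * (-1) ^ (i - 1))
        = α * ∑ i ∈ Finset.range n, r i * (i * (-1) ^ (i - 1)) := by
      rw [Finset.mul_sum]
      apply Finset.sum_congr rfl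
      intro i hi
      rw [hr i (Finset.mem_range.mp hi), mul_assoc]
    rw [hd, hsum, hmn, pow_succ]
    push_cast
    ring
  have h2 : IsUnit (f.derivative.eval (-1)) := by
    rw [hder]
    by_contra hu
    have hmem : (-1 : R) ^ n + α * ∑ i ∈ Finset.range n, r i * (i * (-1) ^ (i - 1))
        ∈ IsLocalRing.maximalIdeal R := hu
    have hm1 : ((-1 : R) ^ n) ∈ IsLocalRing.maximalIdeal R := by
      have := (IsLocalRing.maximalIdeal R).sub_mem hmem
        (Ideal.mul_mem_right (∑ i ∈ Finset.range n, r i * (i * (-1 : R) ^ (i - 1))) _ hαm)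
      simp only [add_sub_cancel_right] at this
      exact this
    exact hm1 ((IsUnit.neg isUnit_one).pow n)
  -- apply Hensel
  obtain ⟨x, hroot, hxm⟩ := HenselianLocalRing.is_henselian f hmonic (-1) h1 h2
  have hrooteq : x ^ (n + 1) + x ^ n + ∑ i ∈ Finset.range n, a i * x ^ i = 0 := by
    have := hroot
    rwa [Polynomial.IsRoot, hfeval] at this
  -- x is a unit
  have hxu : IsUnit x := by
    by_contra hx
    have hxmem : x ∈ IsLocalRing.maximalIdeal R := hx
    have hm1 : (-1 : R) ∈ IsLocalRing.maximalIdeal R := by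
      have := (IsLocalRing.maximalIdeal R).sub_mem hxmem hxm
      simp only [sub_sub_cancel] at this
      exact this
    exact hm1 (IsUnit.neg isUnit_one)
  obtain ⟨u, hu⟩ := hxu
  -- x^n * (x + 1) = α * w
  set w : R := -∑ i ∈ Finset.range n, r i * x ^ i with hw
  have hkey : x ^ n * (x + 1) = α * w := by
    have hsum : ∑ i ∈ Finset.range n, a i * x ^ i
        = α * ∑ i ∈ Finset.range n, r i * x ^ i := by
      rw [Finset.mul_sum]
      apply Finset.sum_congr rfl
      intro i hi
      rw [hr i (Finset.mem_range.mp hi), mul_assoc]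
    have h2' : x ^ n * (x + 1) = -(∑ i ∈ Finset.range n, a i * x ^ i) := by
      have h3 : x ^ (n + 1) + x ^ n = -(∑ i ∈ Finset.range n, a i * x ^ i) := by
        linear_combination hrooteq
      rw [← h3, pow_succ]
      ring
    rw [h2', hsum, hw]
    ring
  refine ⟨x, ⟨w * (↑u⁻¹ : R) ^ n, ?_⟩, hrooteq⟩
  have hui : x * (↑u⁻¹ : R) = 1 := by
    rw [← hu]; exact_mod_cast u.mul_inv
  have hfin : α * (w * (↑u⁻¹ : R) ^ n) = x + 1 := by
    calc α * (w * (↑u⁻¹ : R) ^ n) = (α * w) * (↑u⁻¹ : R) ^ n := by ring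
    _ = (x + 1) * (x * (↑u⁻¹ : R)) ^ n := by rw [← hkey, mul_pow]; ring
    _ = x + 1 := by rw [hui]; ring
  rw [hfin]; ring
end

section
/- Let K be a field with a field topology τ (a Hausdorff, non-discrete topology making addition, negation, multiplication, and inversion on K^× continuous). Then τ is t-henselian if and only if τ is gt-henselian and a V-topology. -/
/-!
A gt-henselian V-topology is t-henselian: take `P = K`. Conversely, we show by induction
on `n` that for every neighbourhood `P` of `-1`, the polynomials
`X^(n+1) + b X^n + a_(n-1) X^(n-1) + … + a_0` with `b` near `1` and all `a_i` near `0` have a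
root in `P`; rescaling `X ↦ b X` reduces this to `b = 1`. In degree `n + 2`, t-henselianity
gives a root `y`. The reversed polynomial shows that `y⁻¹` is not small, so `y` is bounded and
`y^(n+1) (y + 1) = -∑ a_i y^i` is small. As the topology is a V-topology, `y` is then near `-1`,
or near `0`, in which case dividing by `X - y` leaves `X^(n+1) + (1 + y) X^n + (small terms)`,
to which the induction hypothesis applies.
-/

open Topology

/-- A field topology is gt-henselian if for every `n ≥ 1` and every neighbourhood `P` of
`−1` there is a neighbourhood `O` of `0` such that for all `a₀, …, a_{n−1} ∈ O` the
polynomial `X^{n+1} + X^n + a_{n−1}X^{n−1} + … + a₁X + a₀` has a root in `P`. -/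
def GtHenselian (K : Type*) [Field K] [TopologicalSpace K] : Prop :=
  ∀ n : ℕ, 1 ≤ n → ∀ P ∈ nhds (-1 : K), ∃ O ∈ nhds (0 : K),
    ∀ a : ℕ → K, (∀ i < n, a i ∈ O) →
      ∃ x ∈ P, x ^ (n + 1) + x ^ n + ∑ i ∈ Finset.range n, a i * x ^ i = 0

/-- A field topology is a V-topology if for every neighbourhood `U` of `0` there is a
neighbourhood `W` of `0` such that `xy ∈ W` implies `x ∈ U` or `y ∈ U`. -/
def VTopology (K : Type*) [Field K] [TopologicalSpace K] : Prop :=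
  ∀ U ∈ nhds (0 : K), ∃ W ∈ nhds (0 : K), ∀ x y : K, x * y ∈ W → x ∈ U ∨ y ∈ U

/-- A field topology is t-henselian if it is a V-topology and for every `n ≥ 2` there is a
neighbourhood `U` of `0` such that every polynomial
`X^n + X^{n−1} + a_{n−2}X^{n−2} + … + a₁X + a₀` with `a₀, …, a_{n−2} ∈ U` has a root. -/
def THenselian (K : Type*) [Field K] [TopologicalSpace K] : Prop :=
  VTopology K ∧
    ∀ n : ℕ, 2 ≤ n → ∃ U ∈ nhds (0 : K),
      ∀ a : ℕ → K, (∀ i < n - 1, a i ∈ U) →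
        ∃ x : K, x ^ n + x ^ (n - 1) + ∑ i ∈ Finset.range (n - 1), a i * x ^ i = 0

open Filter Finset

theorem sum_mul_pow_sub_sum_mul_pow {R : Type*} [CommRing R] (c : ℕ → R) (m : ℕ) (x y : R) :
    ∑ k ∈ range m, c k * x ^ k - ∑ k ∈ range m, c k * y ^ k =
      (x - y) * ∑ j ∈ range m, (∑ k ∈ Ico (j + 1) m, c k * y ^ (k - 1 - j)) * x ^ j := by
  induction m with
  | zero => simp
  | succ m ih =>
    have hsplit : ∑ j ∈ range m, (∑ k ∈ Ico (j + 1) (m + 1), c k * y ^ (k - 1 - j)) * x ^ j =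
        ∑ j ∈ range m, (∑ k ∈ Ico (j + 1) m, c k * y ^ (k - 1 - j)) * x ^ j +
          c m * ∑ j ∈ range m, x ^ j * y ^ (m - 1 - j) := by
      rw [mul_sum, ← sum_add_distrib]
      refine sum_congr rfl fun j hj => ?_
      rw [sum_Ico_succ_top (by simpa using hj)]
      ring
    rw [sum_range_succ, sum_range_succ, sum_range_succ, Ico_self, sum_empty, zero_mul, add_zero,
      hsplit, mul_add, ← ih]
    linear_combination -c m * (Commute.all x y).geom_sum₂_mul m

section CommRing
variable {K : Type*} [CommRing K]

def gtPoly (n : ℕ) (b : K) (a : ℕ → K) (x : K) : K :=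
  x ^ (n + 1) + b * x ^ n + ∑ i ∈ range n, a i * x ^ i

def gtQuotCoeff (n : ℕ) (b : K) (c : ℕ → K) (y : K) (j : ℕ) : K :=
  ∑ k ∈ Ico (j + 1) (n + 1), c k * y ^ (k - 1 - j) + b * y ^ (n - j) + y ^ (n + 1 - j)

theorem gtPoly_sub_gtPoly (n : ℕ) (b : K) (c : ℕ → K) (x y : K) :
    gtPoly (n + 1) b c x - gtPoly (n + 1) b c y =
      (x - y) * gtPoly n (b + y) (gtQuotCoeff n b c y) x := by
  have h₁ := (Commute.all x y).geom_sum₂_mul (n + 2)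
  have h₂ := (Commute.all x y).geom_sum₂_mul (n + 1)
  have h₃ := sum_mul_pow_sub_sum_mul_pow c (n + 1) x y
  have hG₁ : ∑ i ∈ range (n + 2), x ^ i * y ^ (n + 2 - 1 - i) =
      ∑ j ∈ range n, x ^ j * y ^ (n + 1 - j) + x ^ n * y + x ^ (n + 1) := by
    simp [sum_range_succ]
  have hG₂ : ∑ i ∈ range (n + 1), x ^ i * y ^ (n + 1 - 1 - i) =
      ∑ j ∈ range n, x ^ j * y ^ (n - j) + x ^ n := by
    simp [sum_range_succ]
  have hD : ∑ j ∈ range (n + 1), (∑ k ∈ Ico (j + 1) (n + 1), c k * y ^ (k - 1 - j)) * x ^ j =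
      ∑ j ∈ range n, (∑ k ∈ Ico (j + 1) (n + 1), c k * y ^ (k - 1 - j)) * x ^ j := by
    simp [sum_range_succ]
  rw [hG₁] at h₁
  rw [hG₂] at h₂
  rw [hD] at h₃
  simp only [gtPoly, gtQuotCoeff, add_mul, sum_add_distrib, mul_assoc, ← mul_sum,
    mul_comm (y ^ _) (x ^ _)]
  linear_combination h₃ - h₁ - b * h₂

end CommRing

section Field
variable {K : Type*} [Field K]

theorem gtPoly_mul (n : ℕ) (a : ℕ → K) {b : K} (hb : b ≠ 0) (y : K) :
    gtPoly n b a (b * y) = b ^ (n + 1) * gtPoly n 1 (fun i => a i * b⁻¹ ^ (n + 1 - i)) y := by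
  have hterm : ∀ i ∈ range n, a i * (b * y) ^ i = b ^ (n + 1) * (a i * b⁻¹ ^ (n + 1 - i) * y ^ i) :=
    fun i hi => by
      rw [← pow_sub_mul_pow b (by simp at hi; omega : i ≤ n + 1), mul_pow, inv_pow]
      field_simp
  simp only [gtPoly, mul_add, mul_sum, sum_congr rfl hterm]
  ring

theorem gtPoly_eq_pow_mul (n : ℕ) (b : K) (a : ℕ → K) {y : K} (hy : y ≠ 0) :
    gtPoly n b a y = y ^ (n + 1) * (1 + b * y⁻¹ + ∑ i ∈ range n, a i * y⁻¹ ^ (n + 1 - i)) := by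
  have hterm : ∀ i ∈ range n, a i * y ^ i = y ^ (n + 1) * (a i * y⁻¹ ^ (n + 1 - i)) :=
    fun i hi => by
      rw [← pow_sub_mul_pow y (by simp at hi; omega : i ≤ n + 1), inv_pow]
      field_simp
  simp only [gtPoly, mul_add, mul_sum, sum_congr rfl hterm]
  field_simp
  ring

end Field

section CoeffNhds
variable {K : Type*} [TopologicalSpace K] [Zero K]

variable (K) in
def coeffNhds (n : ℕ) : Filter (ℕ → K) :=
  comap (fun a (i : Fin n) => a i) (𝓝 0)

theorem mem_coeffNhds {n : ℕ} {S : Set (ℕ → K)} :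
    S ∈ coeffNhds K n ↔ ∃ O ∈ 𝓝 (0 : K), ∀ a : ℕ → K, (∀ i < n, a i ∈ O) → a ∈ S := by
  rw [coeffNhds, nhds_pi, Pi.zero_def, ((𝓝 (0 : K)).basis_sets.pi_self.comap _).mem_iff]
  constructor
  · rintro ⟨⟨I, O⟩, ⟨-, hO⟩, hsub⟩
    exact ⟨O, hO, fun a ha => hsub fun i _ => ha i i.2⟩
  · rintro ⟨O, hO, hsub⟩
    exact ⟨⟨Set.univ, O⟩, ⟨Set.finite_univ, hO⟩, fun a ha => hsub a fun i hi => ha ⟨i, hi⟩ trivial⟩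

theorem tendsto_coeffNhds {α : Type*} {l : Filter α} {n : ℕ} {f : α → ℕ → K} :
    Tendsto f l (coeffNhds K n) ↔ ∀ i < n, Tendsto (fun x => f x i) l (𝓝 0) := by
  rw [coeffNhds, tendsto_comap_iff, tendsto_pi_nhds]
  exact ⟨fun h i hi => h ⟨i, hi⟩, fun h i => h i i.2⟩

theorem tendsto_apply_coeffNhds {n i : ℕ} (hi : i < n) :
    Tendsto (fun a : ℕ → K => a i) (coeffNhds K n) (𝓝 0) :=
  tendsto_coeffNhds.1 tendsto_id i hi

end CoeffNhds

section BoundedMul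
variable {K : Type*} [TopologicalSpace K]

theorem tendsto_mul_pow_of_tendsto_mul [MonoidWithZero K] {B : Set K}
    (hB : Tendsto (fun p : K × K => p.1 * p.2) (𝓝 0 ×ˢ 𝓟 B) (𝓝 0)) (k : ℕ) :
    Tendsto (fun p : K × K => p.1 * p.2 ^ k) (𝓝 0 ×ˢ 𝓟 B) (𝓝 0) := by
  induction k with
  | zero => simpa using tendsto_fst
  | succ k ih =>
    simp only [pow_succ, ← mul_assoc]
    exact hB.comp (ih.prodMk tendsto_snd)

theorem tendsto_sum_mul_pow_of_tendsto_mul [Semiring K] [ContinuousAdd K] {B : Set K}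
    (hB : Tendsto (fun p : K × K => p.1 * p.2) (𝓝 0 ×ˢ 𝓟 B) (𝓝 0)) (n : ℕ) :
    Tendsto (fun p : (ℕ → K) × K => ∑ i ∈ range n, p.1 i * p.2 ^ i)
      (coeffNhds K n ×ˢ 𝓟 B) (𝓝 0) := by
  simpa using tendsto_finsetSum (range n) fun i hi =>
    (tendsto_mul_pow_of_tendsto_mul hB i).comp
      ((tendsto_apply_coeffNhds (mem_range.1 hi)).prodMap tendsto_id)

end BoundedMul

namespace VTopology
variable {K : Type*} [Field K] [TopologicalSpace K]

theorem exists_pow_mul_mem (hV : VTopology K) (k : ℕ) {U U' : Set K} (hU : U ∈ 𝓝 0)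
    (hU' : U' ∈ 𝓝 0) : ∃ W ∈ 𝓝 (0 : K), ∀ y z : K, y ^ k * z ∈ W → y ∈ U ∨ z ∈ U' := by
  induction k with
  | zero => exact ⟨U', hU', fun y z h => Or.inr (by simpa using h)⟩
  | succ k ih =>
    obtain ⟨W₁, hW₁, h₁⟩ := ih
    obtain ⟨W, hW, h⟩ := hV (U ∩ W₁) (inter_mem hU hW₁)
    refine ⟨W, hW, fun y z hyz => ?_⟩
    rw [pow_succ', mul_assoc] at hyz
    rcases h y (y ^ k * z) hyz with hy | hz
    · exact Or.inl hy.1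
    · exact h₁ y z hz.2

/-- `{y | y⁻¹ ∈ Z → y = 0}` is the set of elements bounded away from infinity; the clause
`y = 0` is there because `0⁻¹ = 0`. -/
theorem tendsto_mul_of_inv_notMem (hV : VTopology K) {Z : Set K} (hZ : Z ∈ 𝓝 0) :
    Tendsto (fun p : K × K => p.1 * p.2) (𝓝 0 ×ˢ 𝓟 {y | y⁻¹ ∈ Z → y = 0}) (𝓝 0) := by
  intro T hT
  obtain ⟨W, hW, h⟩ := hV (Z ∩ T) (inter_mem hZ hT)
  refine mem_prod_principal.2 (mem_of_superset hW fun c hc y hy => ?_)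
  rcases eq_or_ne y 0 with rfl | hy0
  · simpa using mem_of_mem_nhds hT
  · have : y⁻¹ * (c * y) ∈ W := by rwa [mul_comm c, inv_mul_cancel_left₀ hy0]
    rcases h _ _ this with hyZ | hcy
    · exact absurd (hy hyZ.1) hy0
    · exact hcy.2

end VTopology

section GtHenselianAt
variable {K : Type*} [Field K] [TopologicalSpace K]

variable (K) in
def GtHenselianAt (n : ℕ) : Prop :=
  ∀ P ∈ 𝓝 (-1 : K), ∀ᶠ p in 𝓝 1 ×ˢ coeffNhds K n, ∃ x ∈ P, gtPoly n p.1 p.2 x = 0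

theorem gtHenselianAt_zero [IsTopologicalRing K] : GtHenselianAt K 0 := by
  intro P hP
  have hneg : Tendsto (fun b : K => -b) (𝓝 1) (𝓝 (-1)) := continuous_neg.tendsto 1
  filter_upwards [tendsto_fst.eventually (hneg.eventually_mem hP)] with p hp
  exact ⟨-p.1, hp, by simp [gtPoly]⟩

theorem gtHenselianAt_of_forall_monic [IsTopologicalRing K] [ContinuousInv₀ K] [T1Space K]
    {n : ℕ} (h : ∀ P ∈ 𝓝 (-1 : K), ∀ᶠ a in coeffNhds K n, ∃ x ∈ P, gtPoly n 1 a x = 0) :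
    GtHenselianAt K n := by
  intro P hP
  have hmul : Tendsto (fun q : K × K => q.1 * q.2) (𝓝 1 ×ˢ 𝓝 (-1)) (𝓝 (-1)) := by
    simpa [nhds_prod_eq] using (continuous_mul (M := K)).tendsto (1, -1)
  obtain ⟨V, hV, P', hP', hVP'⟩ := mem_prod_iff.1 (hmul hP)
  have hscale : Tendsto (fun p : K × (ℕ → K) => fun i => p.2 i * p.1⁻¹ ^ (n + 1 - i))
      (𝓝 1 ×ˢ coeffNhds K n) (coeffNhds K n) := by
    refine tendsto_coeffNhds.2 fun i hi => ?_
    have hinv := (tendsto_inv₀ (one_ne_zero (α := K))).pow (n + 1 - i)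
    rw [inv_one, one_pow] at hinv
    simpa using ((tendsto_apply_coeffNhds hi).comp tendsto_snd).mul (hinv.comp tendsto_fst)
  filter_upwards [hscale.eventually (h P' hP'), tendsto_fst.eventually hV,
    tendsto_fst.eventually (eventually_ne_nhds (one_ne_zero (α := K)))] with p hroot hpV hp0
  obtain ⟨y, hyP', hy⟩ := hroot
  exact ⟨p.1 * y, hVP' (Set.mk_mem_prod hpV hyP'), by rw [gtPoly_mul n p.2 hp0, hy, mul_zero]⟩

theorem GtHenselianAt.exists_nhds_small_root [IsTopologicalRing K] {n : ℕ}
    (h : GtHenselianAt K n) {P : Set K} (hP : P ∈ 𝓝 (-1)) :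
    ∃ U ∈ 𝓝 (0 : K), ∀ᶠ c in coeffNhds K (n + 1), ∀ y ∈ U,
      gtPoly (n + 1) 1 c y = 0 → ∃ x ∈ P, gtPoly (n + 1) 1 c x = 0 := by
  have hsnd : Tendsto (fun p : (ℕ → K) × K => p.2) (coeffNhds K (n + 1) ×ˢ 𝓝 0) (𝓝 0) :=
    tendsto_snd
  have hpow : ∀ m ≠ 0, Tendsto (fun p : (ℕ → K) × K => p.2 ^ m)
      (coeffNhds K (n + 1) ×ˢ 𝓝 0) (𝓝 0) := fun m hm => by
    simpa [zero_pow hm] using hsnd.pow m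
  have hquot : Tendsto (fun p : (ℕ → K) × K => (1 + p.2, gtQuotCoeff n 1 p.1 p.2))
      (coeffNhds K (n + 1) ×ˢ 𝓝 0) (𝓝 1 ×ˢ coeffNhds K n) := by
    refine .prodMk (by simpa using hsnd.const_add 1) (tendsto_coeffNhds.2 fun j hj => ?_)
    have hsum : Tendsto
        (fun p : (ℕ → K) × K => ∑ k ∈ Ico (j + 1) (n + 1), p.1 k * p.2 ^ (k - 1 - j))
        (coeffNhds K (n + 1) ×ˢ 𝓝 0) (𝓝 0) := by
      simpa using tendsto_finsetSum _ fun k hk =>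
        ((tendsto_apply_coeffNhds (mem_Ico.1 hk).2).comp tendsto_fst).mul (hsnd.pow (k - 1 - j))
    simpa [gtQuotCoeff] using (hsum.add (hpow (n - j) (by omega))).add (hpow (n + 1 - j) (by omega))
  obtain ⟨pa, hpa, pb, hpb, hab⟩ := eventually_prod_iff.1 (hquot.eventually (h P hP))
  refine ⟨{y | pb y}, hpb, hpa.mono fun c hc y hy hroot => ?_⟩
  obtain ⟨x, hxP, hx⟩ := hab hc hy
  refine ⟨x, hxP, ?_⟩
  simpa [hroot, hx] using gtPoly_sub_gtPoly n 1 c x y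

end GtHenselianAt

theorem exists_nhds_eventually_inv_root_notMem {K : Type*} [Field K] [TopologicalSpace K]
    [IsTopologicalRing K] [T1Space K] (n : ℕ) :
    ∃ Z ∈ 𝓝 (0 : K), ∀ᶠ a in coeffNhds K n, ∀ y, gtPoly n 1 a y = 0 → y⁻¹ ∈ Z → y = 0 := by
  have hrev : Tendsto
      (fun p : (ℕ → K) × K => 1 + 1 * p.2 + ∑ i ∈ range n, p.1 i * p.2 ^ (n + 1 - i))
      (coeffNhds K n ×ˢ 𝓝 0) (𝓝 1) := by
    have hsnd : Tendsto (fun p : (ℕ → K) × K => p.2) (coeffNhds K n ×ˢ 𝓝 0) (𝓝 0) := tendsto_snd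
    have hsum : Tendsto (fun p : (ℕ → K) × K => ∑ i ∈ range n, p.1 i * p.2 ^ (n + 1 - i))
        (coeffNhds K n ×ˢ 𝓝 0) (𝓝 0) := by
      simpa using tendsto_finsetSum _ fun i hi =>
        ((tendsto_apply_coeffNhds (mem_range.1 hi)).comp tendsto_fst).mul (hsnd.pow (n + 1 - i))
    simpa using ((hsnd.const_mul 1).const_add 1).add hsum
  obtain ⟨pa, hpa, pb, hpb, h⟩ := eventually_prod_iff.1 (hrev.eventually_ne one_ne_zero)
  refine ⟨{z | pb z}, hpb, hpa.mono fun a ha y hy hyZ => by_contra fun hy0 => h ha hyZ ?_⟩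
  rw [gtPoly_eq_pow_mul n 1 a hy0] at hy
  exact (mul_eq_zero.1 hy).resolve_left (pow_ne_zero _ hy0)

namespace THenselian
variable {K : Type*} [Field K] [TopologicalSpace K]

theorem eventually_exists_root (hT : THenselian K) (n : ℕ) :
    ∀ᶠ a in coeffNhds K (n + 1), ∃ y, gtPoly (n + 1) 1 a y = 0 := by
  obtain ⟨U, hU, hroot⟩ := hT.2 (n + 2) (by omega)
  exact mem_coeffNhds.2 ⟨U, hU, fun a ha => by simpa [gtPoly] using hroot a ha⟩

theorem gtHenselianAt_succ [IsTopologicalRing K] [ContinuousInv₀ K] [T1Space K]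
    (hT : THenselian K) {n : ℕ} (h : GtHenselianAt K n) : GtHenselianAt K (n + 1) := by
  refine gtHenselianAt_of_forall_monic fun P hP => ?_
  obtain ⟨U, hU, hsmall⟩ := h.exists_nhds_small_root hP
  obtain ⟨Z, hZ, hbdd⟩ := exists_nhds_eventually_inv_root_notMem (K := K) (n + 1)
  have hshift : (fun t : K => t - 1) ⁻¹' P ∈ 𝓝 0 :=
    (continuous_sub_right (1 : K)).tendsto' 0 (-1) (by norm_num) hP
  obtain ⟨W, hW, hsplit⟩ := VTopology.exists_pow_mul_mem hT.1 (n + 1) hU hshift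
  have hsum := (tendsto_sum_mul_pow_of_tendsto_mul (VTopology.tendsto_mul_of_inv_notMem hT.1 hZ)
    (n + 1)).eventually (neg_mem_nhds_zero K hW)
  rw [eventually_prod_principal_iff] at hsum
  filter_upwards [eventually_exists_root hT n, hbdd, hsum, hsmall] with c ⟨y, hy⟩ hbdd hsum hsmall
  have hyW : y ^ (n + 1) * (y + 1) ∈ W := by
    have : y ^ (n + 1) * (y + 1) = -∑ i ∈ range (n + 1), c i * y ^ i := by
      simp only [gtPoly] at hy
      linear_combination hy
    rw [this, ← Set.mem_neg]
    exact hsum y (hbdd y hy)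
  rcases hsplit y (y + 1) hyW with hyU | hyP
  · exact hsmall y hyU hy
  · exact ⟨y, by simpa using hyP, hy⟩

theorem gtHenselian [IsTopologicalRing K] [ContinuousInv₀ K] [T1Space K] (hT : THenselian K) :
    GtHenselian K := by
  have h : ∀ n, GtHenselianAt K n := by
    intro n
    induction n with
    | zero => exact gtHenselianAt_zero
    | succ n ih => exact gtHenselianAt_succ hT ih
  intro n _ P hP
  obtain ⟨O, hO, hroot⟩ :=
    mem_coeffNhds.1 ((tendsto_const_nhds.prodMk tendsto_id).eventually (h n P hP))
  exact ⟨O, hO, fun a ha => by simpa [gtPoly] using hroot a ha⟩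

theorem of_gtHenselian (hgt : GtHenselian K) (hV : VTopology K) : THenselian K := by
  refine ⟨hV, fun n hn => ?_⟩
  obtain ⟨O, hO, h⟩ := hgt (n - 1) (by omega) Set.univ univ_mem
  refine ⟨O, hO, fun a ha => ?_⟩
  obtain ⟨x, -, hx⟩ := h a ha
  exact ⟨x, by rwa [Nat.sub_add_cancel (by omega)] at hx⟩

end THenselian

theorem statement11_general {K : Type*} [Field K] [TopologicalSpace K]
    [IsTopologicalRing K] [ContinuousInv₀ K] [T2Space K] :
    THenselian K ↔ GtHenselian K ∧ VTopology K :=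
  ⟨fun hT => ⟨THenselian.gtHenselian hT, hT.1⟩, fun h => THenselian.of_gtHenselian h.1 h.2⟩

/-- A field topology (Hausdorff, non-discrete, with continuous field
operations) is t-henselian if and only if it is gt-henselian and a V-topology. -/
theorem statement11 {K : Type*} [Field K] [TopologicalSpace K]
    [IsTopologicalRing K] [ContinuousInv₀ K] [T2Space K]
    (hnd : ¬ DiscreteTopology K) :
    THenselian K ↔ GtHenselian K ∧ VTopology K :=
  statement11_general
end

section
/- Let K be a field with a field topology τ. Then τ is gt-henselian if and only if the following simple-root stability holds: whenever α ∈ K is a simple root of a monic polynomial f ∈ K[X] of degree n (i.e., f(α) = 0 and f′(α) ≠ 0) and P ⊆ K is a τ-neighbourhood of α, there is a neighbourhood O ⊆ Kⁿ (in the product topology) of the coefficient tuple (a₀, …, a_{n−1}) of f = Xⁿ + a_{n−1}X^{n−1} + … + a₀ such that every monic polynomial of degree n whose coefficient tuple lies in O has a simple root in P. -/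
/-!
If `α` is a simple root of `f`, the Taylor expansion `c₀ + c₁X + ⋯ + cₙXⁿ` at `α` of a monic `g`
near `f` has `c₀` small and `c₁` away from `0`. Substituting `X = (c₀ / c₁) / w` turns it, up to
the factor `c₀ w⁻ⁿ`, into `wⁿ + wⁿ⁻¹ + ∑_{k ≥ 2} (cₖ c₀ᵏ⁻¹ / c₁ᵏ) wⁿ⁻ᵏ`, a small perturbation of
`wⁿ + wⁿ⁻¹`. Gt-henselianity gives a root `w` near `-1`, hence the root `α + c₀ / (c₁ w)` of `g`
near `α`, which is simple because `g'(x)` depends continuously on `(g, x)`. Conversely,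
`Xⁿ⁺¹ + Xⁿ` has the simple root `-1`, and its monic perturbations with small lower coefficients
are the polynomials in the definition of gt-henselianity.
-/

open Topology Polynomial

open Filter

theorem exists_univ_pi_const_subset_of_mem_nhds {ι X : Type*} [Finite ι] [TopologicalSpace X]
    {x : X} {S : Set (ι → X)} (hS : S ∈ 𝓝 fun _ => x) :
    ∃ O ∈ 𝓝 x, Set.univ.pi (fun _ => O) ⊆ S := by
  rw [nhds_pi, Filter.mem_pi'] at hS
  obtain ⟨I, t, ht, hsub⟩ := hS
  exact ⟨⋂ i, t i, Filter.iInter_mem.2 ht,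
    fun b hb => hsub fun i _ => Set.mem_iInter.1 (hb i trivial) i⟩

namespace Polynomial

section MonicOfFn

variable {R : Type*} [Semiring R] [DecidableEq R] {n : ℕ}

noncomputable def monicOfFn (n : ℕ) (v : Fin n → R) : R[X] := X ^ n + ofFn n v

theorem monic_monicOfFn (v : Fin n → R) : (monicOfFn n v).Monic :=
  monic_X_pow_add (ofFn_degree_lt v)

theorem natDegree_monicOfFn [Nontrivial R] (v : Fin n → R) : (monicOfFn n v).natDegree = n := by
  rw [monicOfFn, natDegree_add_eq_left_of_degree_lt, natDegree_X_pow]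
  simpa only [degree_X_pow] using ofFn_degree_lt v

theorem coeff_monicOfFn (v : Fin n → R) (i : Fin n) : (monicOfFn n v).coeff i = v i := by
  simp [monicOfFn, coeff_X_pow, i.isLt.ne]

theorem Monic.monicOfFn_coeff {g : R[X]} (hg : g.Monic) (hdeg : g.natDegree = n) :
    monicOfFn n (fun i : Fin n => g.coeff i) = g := by
  ext k
  rcases lt_trichotomy k n with hk | rfl | hk
  · simp [monicOfFn, coeff_X_pow, hk.ne, hk]
  · simp [monicOfFn, ← hdeg, hg.coeff_natDegree]
  · simp [monicOfFn, coeff_X_pow, hk.ne', hk.le, coeff_eq_zero_of_natDegree_lt (hdeg ▸ hk)]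

theorem eval_ofFn (v : Fin n → R) (x : R) : (ofFn n v).eval x = ∑ i, v i * x ^ (i : ℕ) := by
  simp [ofFn_eq_sum_monomial, eval_finsetSum]

theorem monicOfFn_snoc (v : Fin n → R) (c : R) :
    monicOfFn (n + 1) (Fin.snoc v c) = X ^ (n + 1) + C c * X ^ n + ofFn n v := by
  simp [monicOfFn, ofFn_eq_sum_monomial, Fin.sum_univ_castSucc, C_mul_X_pow_eq_monomial]
  abel

theorem continuous_coeff_map_monicOfFn [TopologicalSpace R] [IsTopologicalSemiring R]
    (L : R[X] →ₗ[R] R[X]) (k : ℕ) :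
    Continuous fun v : Fin n → R => (L (monicOfFn n v)).coeff k := by
  have hsplit : (fun v : Fin n → R => (L (monicOfFn n v)).coeff k) =
      fun v => (L (X ^ n)).coeff k + ((lcoeff R k).comp (L.comp (ofFn n))) v := by
    funext v
    simp [monicOfFn]
  rw [hsplit]
  exact continuous_const.add (LinearMap.continuous_on_pi _)

end MonicOfFn

theorem continuous_eval_of_continuous_coeff {R T : Type*} [Semiring R] [TopologicalSpace R]
    [IsTopologicalSemiring R] [TopologicalSpace T] {p : T → R[X]} {N : ℕ}
    (hdeg : ∀ x, (p x).natDegree ≤ N) (hcoeff : ∀ k, Continuous fun x => (p x).coeff k) :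
    Continuous fun q : T × R => (p q.1).eval q.2 := by
  have hsum : (fun q : T × R => (p q.1).eval q.2) =
      fun q => ∑ k ∈ Finset.range (N + 1), (p q.1).coeff k * q.2 ^ k := by
    funext q
    exact eval_eq_sum_range' (Nat.lt_succ_of_le (hdeg q.1)) q.2
  rw [hsum]
  exact continuous_finsetSum _ fun k _ =>
    ((hcoeff k).comp continuous_fst).mul (continuous_snd.pow k)

theorem pow_mul_eval_div_eq {K : Type*} [Field K] {h : K[X]} {m : ℕ}
    (hdeg : h.natDegree ≤ m + 2) (h1 : h.coeff 1 ≠ 0) {w : K} (hw : w ≠ 0) :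
    w ^ (m + 2) * h.eval (h.coeff 0 / h.coeff 1 / w) =
      h.coeff 0 * (w ^ (m + 2) + w ^ (m + 1) + ∑ i ∈ Finset.range (m + 1),
        h.coeff (m + 2 - i) * h.coeff 0 ^ (m + 1 - i) / h.coeff 1 ^ (m + 2 - i) * w ^ i) := by
  rw [eval_eq_sum_range' (Nat.lt_succ_of_le hdeg), Finset.mul_sum,
    ← Finset.sum_range_reflect, Finset.sum_range_succ, Finset.sum_range_succ, mul_add, mul_add,
    Finset.mul_sum]
  have hterm : ∀ i ∈ Finset.range (m + 1),
      w ^ (m + 2) * (h.coeff (m + 3 - 1 - i) * (h.coeff 0 / h.coeff 1 / w) ^ (m + 3 - 1 - i)) =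
        h.coeff 0 * (h.coeff (m + 2 - i) * h.coeff 0 ^ (m + 1 - i) / h.coeff 1 ^ (m + 2 - i) *
          w ^ i) := by
    intro i hi
    obtain ⟨j, rfl⟩ := Nat.exists_eq_add_of_le (Nat.lt_succ_iff.1 (Finset.mem_range.1 hi))
    rw [show i + j + 3 - 1 - i = j + 2 by omega, show i + j + 2 - i = j + 2 by omega,
      show i + j + 1 - i = j + 1 by omega, add_assoc i j 2, pow_add w i (j + 2), div_pow, div_pow]
    field_simp
    ring
  rw [Finset.sum_congr rfl hterm]
  simp only [show m + 3 - 1 - (m + 1) = 1 by omega, show m + 3 - 1 - (m + 2) = 0 by omega]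
  field_simp
  ring

end Polynomial

section Forward

variable {K : Type*} [Field K] [TopologicalSpace K] [IsTopologicalRing K] [ContinuousInv₀ K]
  [T1Space K]

theorem GtHenselian.eventually_exists_isRoot_div (hK : GtHenselian K) {T : Type*}
    [TopologicalSpace T] {p : T → K[X]} {n : ℕ} (hdeg : ∀ t, (p t).natDegree ≤ n)
    (hcoeff : ∀ k, Continuous fun t => (p t).coeff k) {t₀ : T} (h0 : (p t₀).coeff 0 = 0)
    (h1 : (p t₀).coeff 1 ≠ 0) {Q : Set K} (hQ : Q ∈ 𝓝 (-1)) :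
    ∀ᶠ t in 𝓝 t₀, ∃ w ∈ Q, (p t).IsRoot ((p t).coeff 0 / (p t).coeff 1 / w) := by
  have hc1 : ∀ᶠ t in 𝓝 t₀, (p t).coeff 1 ≠ 0 := (hcoeff 1).continuousAt.eventually_ne h1
  rcases n with _ | _ | m
  · exact absurd (coeff_eq_zero_of_natDegree_lt ((hdeg t₀).trans_lt one_pos)) h1
  · filter_upwards [hc1] with t ht
    refine ⟨-1, mem_of_mem_nhds hQ, ?_⟩
    rw [IsRoot.def, eval_eq_sum_range' (Nat.lt_succ_of_le (hdeg t))]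
    simp only [Finset.sum_range_succ, Finset.sum_range_zero]
    field_simp
    ring
  · obtain ⟨O, hO, hroot⟩ := hK (m + 1) m.succ_pos (Q ∩ {0}ᶜ)
      (inter_mem hQ (compl_singleton_mem_nhds (neg_ne_zero.2 one_ne_zero)))
    set b : T → ℕ → K := fun t i =>
      (p t).coeff (m + 2 - i) * (p t).coeff 0 ^ (m + 1 - i) / (p t).coeff 1 ^ (m + 2 - i)
    have hsmall : ∀ᶠ t in 𝓝 t₀, ∀ i ∈ Finset.range (m + 1), b t i ∈ O := by
      rw [eventually_all_finset]
      intro i hi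
      have hb : ContinuousAt (b · i) t₀ :=
        (((hcoeff _).mul ((hcoeff 0).pow _)).continuousAt).div ((hcoeff 1).pow _).continuousAt
          (pow_ne_zero _ h1)
      have hb0 : b t₀ i = 0 := by
        have hexp : m + 1 - i ≠ 0 := by have := Finset.mem_range.1 hi; omega
        simp [b, h0, zero_pow hexp]
      exact hb.preimage_mem_nhds (by rwa [hb0])
    filter_upwards [hc1, hsmall] with t ht1 hts
    obtain ⟨w, ⟨hwQ, hw0⟩, hw⟩ := hroot (b t) fun i hi => hts i (Finset.mem_range.2 hi)
    refine ⟨w, hwQ, ?_⟩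
    have hid : w ^ (m + 2) * (p t).eval ((p t).coeff 0 / (p t).coeff 1 / w) =
        (p t).coeff 0 * (w ^ (m + 2) + w ^ (m + 1) + ∑ i ∈ Finset.range (m + 1), b t i * w ^ i) :=
      pow_mul_eval_div_eq (hdeg t) ht1 hw0
    rw [hw, mul_zero] at hid
    exact (mul_eq_zero.1 hid).resolve_left (pow_ne_zero _ hw0)

theorem GtHenselian.eventually_exists_simple_root [DecidableEq K] (hK : GtHenselian K) {n : ℕ}
    {v₀ : Fin n → K} {α : K} (hα : (monicOfFn n v₀).IsRoot α)
    (hα' : (monicOfFn n v₀).derivative.eval α ≠ 0) {P : Set K} (hP : P ∈ 𝓝 α) :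
    ∀ᶠ v in 𝓝 v₀, ∃ β ∈ P,
      (monicOfFn n v).IsRoot β ∧ (monicOfFn n v).derivative.eval β ≠ 0 := by
  have hsimple : ∀ᶠ q in 𝓝 (v₀, α), (monicOfFn n q.1).derivative.eval q.2 ≠ 0 :=
    (continuous_eval_of_continuous_coeff
      (fun v => ((natDegree_derivative_le _).trans (Nat.sub_le _ 1)).trans
        (natDegree_monicOfFn v).le)
      (continuous_coeff_map_monicOfFn derivative)).continuousAt.eventually_ne hα'
  rw [nhds_prod_eq, eventually_prod_iff] at hsimple
  obtain ⟨U, hU, P₁, hP₁, hUP₁⟩ := hsimple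
  set c : ℕ → (Fin n → K) → K := fun k v => (taylor α (monicOfFn n v)).coeff k
  have hc : ∀ k, Continuous (c k) := continuous_coeff_map_monicOfFn (taylor α)
  have hc0 : c 0 v₀ = 0 := by simpa [c, taylor_coeff_zero] using hα
  have hc1 : c 1 v₀ ≠ 0 := by simpa [c, taylor_coeff_one] using hα'
  have hquot : ContinuousAt (fun q : (Fin n → K) × K => c 0 q.1 / c 1 q.1) (v₀, -1) :=
    ((hc 0).comp continuous_fst).continuousAt.div ((hc 1).comp continuous_fst).continuousAt hc1
  have hshift : ContinuousAt (fun q : (Fin n → K) × K => c 0 q.1 / c 1 q.1 / q.2 + α) (v₀, -1) :=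
    (hquot.div continuousAt_snd (neg_ne_zero.2 one_ne_zero)).add continuousAt_const
  have hnear : ∀ᶠ q in 𝓝 (v₀, -1), c 0 q.1 / c 1 q.1 / q.2 + α ∈ P ∩ {x | P₁ x} :=
    hshift.preimage_mem_nhds (by simpa [hc0] using inter_mem hP hP₁)
  rw [nhds_prod_eq, eventually_prod_iff] at hnear
  obtain ⟨U', hU', Q, hQ, hUQ⟩ := hnear
  filter_upwards [hU, hU', hK.eventually_exists_isRoot_div (p := fun v => taylor α (monicOfFn n v))
    (fun v => by rw [natDegree_taylor, natDegree_monicOfFn]) hc hc0 hc1 hQ]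
    with v hv hv' ⟨w, hwQ, hw⟩
  obtain ⟨hβP, hβP₁⟩ := hUQ hv' hwQ
  exact ⟨_, hβP, by simpa only [IsRoot.def, taylor_eval] using hw, hUP₁ hv hβP₁⟩

end Forward

def SimpleRootsStable (K : Type*) [Field K] [TopologicalSpace K] : Prop :=
  ∀ (n : ℕ) (f : K[X]), f.Monic → f.natDegree = n →
    ∀ α : K, f.eval α = 0 → f.derivative.eval α ≠ 0 →
      ∀ P ∈ nhds α,
        ∃ O ∈ nhds (fun i : Fin n => f.coeff i),
          ∀ g : K[X], g.Monic → g.natDegree = n →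
            (fun i : Fin n => g.coeff i) ∈ O →
            ∃ β ∈ P, g.eval β = 0 ∧ g.derivative.eval β ≠ 0

theorem GtHenselian.simpleRootsStable {K : Type*} [Field K] [TopologicalSpace K]
    [IsTopologicalRing K] [ContinuousInv₀ K] [T1Space K] (hK : GtHenselian K) :
    SimpleRootsStable K := by
  classical
  intro n f hf hdeg α hα hα' P hP
  rw [← hf.monicOfFn_coeff hdeg] at hα hα'
  refine ⟨_, hK.eventually_exists_simple_root hα hα' hP, fun g hg hgdeg hgO => ?_⟩
  rwa [← hg.monicOfFn_coeff hgdeg]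

theorem SimpleRootsStable.gtHenselian {K : Type*} [Field K] [TopologicalSpace K]
    (h : SimpleRootsStable K) : GtHenselian K := by
  classical
  intro n _ P hP
  have hf : monicOfFn (n + 1) (Fin.snoc 0 1) = X ^ n * (X + 1 : K[X]) := by
    rw [monicOfFn_snoc, map_zero, C_1]
    ring
  obtain ⟨O, hO, hstab⟩ := h (n + 1) (monicOfFn (n + 1) (Fin.snoc 0 1)) (monic_monicOfFn _)
    (natDegree_monicOfFn _) (-1) (by simp [hf]) (by simp [hf]) P hP
  simp only [coeff_monicOfFn] at hO
  obtain ⟨O', hO', hsub⟩ := exists_univ_pi_const_subset_of_mem_nhds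
    ((continuous_id.finSnoc continuous_const).continuousAt.preimage_mem_nhds hO)
  refine ⟨O', hO', fun a ha => ?_⟩
  obtain ⟨β, hβP, hβ, -⟩ := hstab (monicOfFn (n + 1) (Fin.snoc (fun i : Fin n => a i) 1))
    (monic_monicOfFn _) (natDegree_monicOfFn _)
    (by simp only [coeff_monicOfFn]; exact hsub fun i _ => ha i i.isLt)
  refine ⟨β, hβP, ?_⟩
  rw [monicOfFn_snoc, eval_add, eval_ofFn, Fin.sum_univ_eq_sum_range (fun i => a i * β ^ i)] at hβ
  simpa using hβ

theorem statement12_general {K : Type*} [Field K] [TopologicalSpace K]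
    [IsTopologicalRing K] [ContinuousInv₀ K] [T2Space K] :
    GtHenselian K ↔
      ∀ (n : ℕ) (f : K[X]), f.Monic → f.natDegree = n →
        ∀ α : K, f.eval α = 0 → f.derivative.eval α ≠ 0 →
          ∀ P ∈ nhds α,
            ∃ O ∈ nhds (fun i : Fin n => f.coeff i),
              ∀ g : K[X], g.Monic → g.natDegree = n →
                (fun i : Fin n => g.coeff i) ∈ O →
                ∃ β ∈ P, g.eval β = 0 ∧ g.derivative.eval β ≠ 0 :=
  ⟨GtHenselian.simpleRootsStable, SimpleRootsStable.gtHenselian⟩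

/-- A field topology is gt-henselian if and only if the following
simple-root stability holds: if `α` is a simple root of a monic polynomial `f` of degree
`n` and `P` is a neighbourhood of `α`, then there is a neighbourhood `O ⊆ Kⁿ` (product
topology) of the coefficient tuple `(a₀, …, a_{n−1})` of `f` such that every monic degree
`n` polynomial whose coefficient tuple lies in `O` has a simple root in `P`. -/
theorem statement12 {K : Type*} [Field K] [TopologicalSpace K]
    [IsTopologicalRing K] [ContinuousInv₀ K] [T2Space K]
    (hnd : ¬ DiscreteTopology K) :
    GtHenselian K ↔
      ∀ (n : ℕ) (f : K[X]), f.Monic → f.natDegree = n →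
        ∀ α : K, f.eval α = 0 → f.derivative.eval α ≠ 0 →
          ∀ P ∈ nhds α,
            ∃ O ∈ nhds (fun i : Fin n => f.coeff i),
              ∀ g : K[X], g.Monic → g.natDegree = n →
                (fun i : Fin n => g.coeff i) ∈ O →
                ∃ β ∈ P, g.eval β = 0 ∧ g.derivative.eval β ≠ 0 :=
  statement12_general
end

section
/- Let K be a field with a ring topology τ (a Hausdorff, non-discrete topology making addition, negation, and multiplication continuous) and let S be a τ-open subring of K. Then K is the fraction field of S, i.e., every element of K can be written as a quotient a/b with a, b ∈ S and b ≠ 0. -/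
open Topology

/-!
Given `x`, the set of `b ∈ S` with `x * b ∈ S` is open (multiplication by `x` is continuous)
and contains `0`. As the topology is not discrete, `{0}` is not open, so this set contains some
`b ≠ 0`, and then `x = (x * b) / b`.
-/

theorem IsOpen.exists_mem_ne_of_not_isOpen_singleton {X : Type*} [TopologicalSpace X]
    {a : X} (ha : ¬ IsOpen ({a} : Set X)) {U : Set X} (hU : IsOpen U) (haU : a ∈ U) :
    ∃ b ∈ U, b ≠ a := by
  by_contra! h
  exact ha (Set.eq_singleton_iff_unique_mem.mpr ⟨haU, h⟩ ▸ hU)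

theorem Subring.exists_ne_zero_mul_mem_of_isOpen {R : Type*} [Ring R] [TopologicalSpace R]
    [IsTopologicalRing R] (hnd : ¬ DiscreteTopology R)
    (S : Subring R) (hopen : IsOpen (S : Set R)) (x : R) :
    ∃ b ∈ S, b ≠ 0 ∧ x * b ∈ S := by
  have h0 : ¬ IsOpen ({0} : Set R) := discreteTopology_iff_isOpen_singleton_zero.not.mp hnd
  have hU : IsOpen ((S : Set R) ∩ (x * ·) ⁻¹' S) :=
    hopen.inter (hopen.preimage (continuous_const_mul x))
  obtain ⟨b, ⟨hbS, hxbS⟩, hb0⟩ :=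
    hU.exists_mem_ne_of_not_isOpen_singleton h0 ⟨S.zero_mem, by simp⟩
  exact ⟨b, hbS, hb0, hxbS⟩

theorem statement17_general {K : Type*} [Field K] [TopologicalSpace K]
    [IsTopologicalRing K]
    (hnd : ¬ DiscreteTopology K)
    (S : Subring K) (hopen : IsOpen (S : Set K)) :
    ∀ x : K, ∃ a ∈ S, ∃ b ∈ S, b ≠ 0 ∧ x = a / b := by
  intro x
  obtain ⟨b, hbS, hb0, hxbS⟩ := S.exists_ne_zero_mul_mem_of_isOpen hnd hopen x
  exact ⟨x * b, hxbS, b, hbS, hb0, (mul_div_cancel_right₀ x hb0).symm⟩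

/-- Let `K` be a field with a ring topology (Hausdorff, non-discrete, with
continuous addition, negation and multiplication) and let `S` be an open subring of `K`.
Then `K` is the fraction field of `S`: every element of `K` is a quotient of elements
of `S`. -/
theorem statement17 {K : Type*} [Field K] [TopologicalSpace K]
    [IsTopologicalRing K] [T2Space K]
    (hnd : ¬ DiscreteTopology K)
    (S : Subring K) (hopen : IsOpen (S : Set K)) :
    ∀ x : K, ∃ a ∈ S, ∃ b ∈ S, b ≠ 0 ∧ x = a / b :=
  statement17_general hnd S hopen
end
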